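/- arXiv:2101.04791 — 11 statements merged into one kernel-verified Lean document; each statement's English description precedes it below -/
import Mathlib

section
/- Let D be a cyclic group of order 2n equipped with a quadratic form q: D → Q/2Z admitting a generator g with q(g) = 1/(2n). Then every isometry of (D, q) is of the form g ↦ ag for some a ∈ Z/2nZ with a² ≡ 1 (mod 4n), and the group of such isometries is isomorphic to (Z/2Z)^{ρ(n)}, where ρ(n) is the number of distinct prime divisors of n. -/
/-!
Every additive automorphism of `ZMod (2n)` is multiplication by a unit `a`, and it preserves
`q(x) = x²/(2n)` exactly when `a² ≡ 1 (mod 4n)`. So the isometry group is an elementary abelian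
`2`-group, and it suffices to count the solutions `a ∈ ZMod (2n)` of `a² ≡ 1 (mod 4n)`. This count
is multiplicative in `n` by the Chinese remainder theorem, and it equals `2` on prime powers:
modulo `p^e` with `p` odd the solutions are `±1`, and `a² ≡ 1 (mod 2^(e+2))` means
`a ≡ ±1 (mod 2^(e+1))`.
-/

theorem Int.prime_pow_dvd_sq_sub_one_iff {p : ℕ} (hp : p.Prime) (hp2 : p ≠ 2) (e : ℕ) (v : ℤ) :
    (p : ℤ) ^ e ∣ v ^ 2 - 1 ↔ (p : ℤ) ^ e ∣ v - 1 ∨ (p : ℤ) ^ e ∣ v + 1 := by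
  have hpZ : Prime (p : ℤ) := Nat.prime_iff_prime_int.mp hp
  have hfac : v ^ 2 - 1 = (v - 1) * (v + 1) := by ring
  refine ⟨fun h => ?_, ?_⟩
  · rw [hfac] at h
    by_cases hv : (p : ℤ) ∣ v - 1
    · -- `p` cannot divide both factors, since they differ by `2`
      have hv' : ¬ (p : ℤ) ∣ v + 1 := fun hv' => hp2 <| (Nat.prime_dvd_prime_iff_eq hp
        Nat.prime_two).mp <| Int.natCast_dvd_natCast.mp (by simpa using dvd_sub hv' hv)
      exact .inl (hpZ.pow_dvd_of_dvd_mul_right e hv' h)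
    · exact .inr (hpZ.pow_dvd_of_dvd_mul_left e hv h)
  · rintro (h | h) <;> rw [hfac]
    · exact h.mul_right _
    · exact h.mul_left _

theorem Int.two_pow_dvd_sq_sub_one_iff (e : ℕ) (v : ℤ) :
    2 ^ (e + 2) ∣ v ^ 2 - 1 ↔ 2 ^ (e + 1) ∣ v - 1 ∨ 2 ^ (e + 1) ∣ v + 1 := by
  refine ⟨fun h => ?_, ?_⟩
  · have h2 : (2 : ℤ) ∣ v ^ 2 - 1 := (dvd_pow_self 2 (by omega)).trans h
    obtain ⟨c, rfl | rfl⟩ := Int.even_or_odd' v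
    · rw [show (2 * c) ^ 2 - 1 = 2 * (2 * c ^ 2) - 1 by ring] at h2
      omega
    have hc : 2 ^ e ∣ c * (c + 1) := by
      rw [pow_add, show (2 * c + 1) ^ 2 - 1 = c * (c + 1) * 2 ^ 2 by ring] at h
      exact (mul_dvd_mul_iff_right (by norm_num)).mp h
    rw [pow_succ', show 2 * c + 1 - 1 = 2 * c by ring, show 2 * c + 1 + 1 = 2 * (c + 1) by ring,
      mul_dvd_mul_iff_left two_ne_zero, mul_dvd_mul_iff_left two_ne_zero]
    by_cases hc2 : (2 : ℤ) ∣ c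
    · exact .inl (Int.prime_two.pow_dvd_of_dvd_mul_right e (by omega) hc)
    · exact .inr (Int.prime_two.pow_dvd_of_dvd_mul_left e hc2 hc)
  · rintro (⟨t, ht⟩ | ⟨t, ht⟩)
    · exact ⟨t * (2 ^ e * t + 1), by rw [show v = 2 ^ (e + 1) * t + 1 by linarith]; ring⟩
    · exact ⟨t * (2 ^ e * t - 1), by rw [show v = 2 ^ (e + 1) * t - 1 by linarith]; ring⟩

theorem ZMod.sq_eq_one_iff_of_prime_pow {p : ℕ} (hp : p.Prime) (hp2 : p ≠ 2) (e : ℕ)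
    (x : ZMod (p ^ e)) : x ^ 2 = 1 ↔ x = 1 ∨ x = -1 := by
  obtain ⟨v, rfl⟩ := ZMod.intCast_surjective x
  have key := Int.prime_pow_dvd_sq_sub_one_iff hp hp2 e v
  rw [← Nat.cast_pow] at key
  simp only [← ZMod.intCast_zmod_eq_zero_iff_dvd, Int.cast_sub, Int.cast_pow, Int.cast_add,
    Int.cast_one] at key
  rwa [← sub_eq_zero, ← sub_eq_zero (a := (v : ZMod (p ^ e))), eq_neg_iff_add_eq_zero]

theorem AddCommGroup.nonempty_addEquiv_fin_pi_zmod {G : Type*} [AddCommGroup G] [Finite G]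
    {p d : ℕ} [hp : Fact p.Prime] (hG : ∀ g : G, p • g = 0) (hcard : Nat.card G = p ^ d) :
    Nonempty (G ≃+ (Fin d → ZMod p)) := by
  have : Module (ZMod p) G := AddCommGroup.zmodModule hG
  have hd : Module.finrank (ZMod p) G = d := by
    have := Fintype.ofFinite G
    rw [Nat.card_eq_fintype_card, Module.card_eq_pow_finrank (K := ZMod p), ZMod.card] at hcard
    exact Nat.pow_right_injective hp.out.two_le hcard
  exact ⟨(LinearEquiv.ofFinrankEq (R := ZMod p) G (Fin d → ZMod p)
    (by rw [hd, Module.finrank_fin_fun])).toAddEquiv⟩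

theorem ZMod.addAut_apply_eq_mul {N : ℕ} (f : AddAut (ZMod N)) (x : ZMod N) : f x = f 1 * x := by
  rw [mul_comm, ← x.intCast_zmod_cast, ← zsmul_eq_mul, ← map_zsmul, zsmul_one]

def AddAut.isometries {M Q : Type*} [Add M] (q : M → Q) : AddSubgroup (AddAut M) where
  carrier := {f | ∀ x, q (f x) = q x}
  zero_mem' _ := rfl
  add_mem' hf hg x := (hf _).trans (hg x)
  neg_mem' {f} hf x := by simpa using (hf (f.symm x)).symm

theorem ZMod.intCast_sq_eq_of_modEq {n : ℕ} {u v : ℤ} (h : u ≡ v [ZMOD 2 * n]) :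
    (u : ZMod (4 * n)) ^ 2 = (v : ZMod (4 * n)) ^ 2 := by
  obtain ⟨t, ht⟩ := Int.modEq_iff_dvd.mp h.symm
  have h4n : ((4 * n : ℕ) : ZMod (4 * n)) = 0 := ZMod.natCast_self _
  rw [show u = v + 2 * n * t by linarith]
  push_cast at h4n ⊢
  linear_combination (v * t + n * t ^ 2) * h4n

theorem ZMod.val_intCast_sq_eq {n : ℕ} [NeZero n] (v : ℤ) :
    ((v : ZMod (2 * n)).val : ZMod (4 * n)) ^ 2 = (v : ZMod (4 * n)) ^ 2 := by
  rw [← Int.cast_natCast, ZMod.val_intCast]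
  exact ZMod.intCast_sq_eq_of_modEq (by push_cast; exact Int.mod_modEq v _)

/-- The discriminant form `q(x) = x²/(2n) mod 2ℤ` on `ZMod (2n)`, scaled by `2n`: it becomes
`x² mod 4n`. -/
def discForm (n : ℕ) [NeZero n] : ZMod (2 * n) →* ZMod (4 * n) where
  toFun x := (x.val : ZMod (4 * n)) ^ 2
  map_one' := by simpa using ZMod.val_intCast_sq_eq (n := n) 1
  map_mul' x y := by
    obtain ⟨u, rfl⟩ := ZMod.intCast_surjective x
    obtain ⟨v, rfl⟩ := ZMod.intCast_surjective y
    simp only [← Int.cast_mul, ZMod.val_intCast_sq_eq]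
    push_cast
    ring

section discForm

variable {n : ℕ} [NeZero n]

theorem discForm_intCast (v : ℤ) : discForm n v = (v : ZMod (4 * n)) ^ 2 :=
  ZMod.val_intCast_sq_eq v

theorem discForm_eq_iff_dvd (x y : ZMod (2 * n)) :
    discForm n y = discForm n x ↔ (4 * n : ℤ) ∣ (y.val : ℤ) ^ 2 - (x.val : ℤ) ^ 2 := by
  have h (z : ZMod (2 * n)) : discForm n z = (((z.val : ℤ) ^ 2 : ℤ) : ZMod (4 * n)) := by
    push_cast; rfl
  rw [h, h, eq_comm, ZMod.intCast_eq_intCast_iff_dvd_sub]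
  push_cast
  rfl

theorem mul_self_eq_one_of_discForm_eq_one {a : ZMod (2 * n)} (ha : discForm n a = 1) :
    a * a = 1 := by
  obtain ⟨v, rfl⟩ := ZMod.intCast_surjective a
  have := congrArg (ZMod.castHom (mul_dvd_mul_right (by norm_num : 2 ∣ 4) n) (ZMod (2 * n))) ha
  rwa [discForm_intCast, map_pow, map_intCast, map_one, sq] at this

theorem discForm_two_pow_eq_one_iff (e : ℕ) (x : ZMod (2 * 2 ^ e)) :
    discForm (2 ^ e) x = 1 ↔ x = 1 ∨ x = -1 := by
  obtain ⟨v, rfl⟩ := ZMod.intCast_surjective x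
  have key := Int.two_pow_dvd_sq_sub_one_iff e v
  rw [show (2 : ℤ) ^ (e + 2) = ((4 * 2 ^ e : ℕ) : ℤ) by push_cast; ring,
    show (2 : ℤ) ^ (e + 1) = ((2 * 2 ^ e : ℕ) : ℤ) by push_cast; ring] at key
  simp only [← ZMod.intCast_zmod_eq_zero_iff_dvd, Int.cast_sub, Int.cast_pow, Int.cast_add,
    Int.cast_one] at key
  rwa [discForm_intCast, ← sub_eq_zero, ← sub_eq_zero (a := (v : ZMod (2 * 2 ^ e))),
    eq_neg_iff_add_eq_zero]

theorem setOf_discForm_one : {x : ZMod (2 * 1) | discForm 1 x = 1} = {1} :=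
  Set.ext (by decide : ∀ x : ZMod (2 * 1), discForm 1 x = 1 ↔ x = 1)

theorem ncard_discForm_eq_mul {a b : ℕ} [NeZero a] (hab : a.Coprime b) (hb : Odd b)
    (hn : a * b = n) :
    {x : ZMod (2 * n) | discForm n x = 1}.ncard =
      {x : ZMod (2 * a) | discForm a x = 1}.ncard * {y : ZMod b | y ^ 2 = 1}.ncard := by
  have h2b : Nat.Coprime 2 b := Nat.coprime_two_left.mpr hb
  let φ : ZMod (2 * n) ≃+* ZMod (2 * a) × ZMod b :=
    (ZMod.ringEquivCongr (by rw [← hn, mul_assoc])).trans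
      (ZMod.chineseRemainder (h2b.mul_left hab))
  let ψ : ZMod (4 * n) ≃+* ZMod (4 * a) × ZMod b :=
    (ZMod.ringEquivCongr (by rw [← hn, mul_assoc])).trans
      (ZMod.chineseRemainder ((Nat.Coprime.pow_left 2 h2b).mul_left hab))
  have hS : {x | discForm n x = 1} = φ ⁻¹' ({x | discForm a x = 1} ×ˢ {y | y ^ 2 = 1}) := by
    ext x
    obtain ⟨v, rfl⟩ := ZMod.intCast_surjective x
    simp only [Set.mem_preimage, map_intCast, Set.mem_prod, Set.mem_ofPred_eq, discForm_intCast]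
    rw [← ψ.map_eq_one_iff, map_pow, map_intCast, Prod.ext_iff]
    simp only [Prod.pow_fst, Prod.fst_intCast, Prod.fst_one, Prod.pow_snd, Prod.snd_intCast,
      Prod.snd_one, discForm_intCast]
  rw [hS, Set.ncard_preimage_of_injective_subset_range φ.injective
    (by simp [φ.surjective.range_eq]), Set.ncard_prod]

theorem ncard_discForm_of_odd (hn : Odd n) :
    {x : ZMod (2 * n) | discForm n x = 1}.ncard = {y : ZMod n | y ^ 2 = 1}.ncard := by
  rw [ncard_discForm_eq_mul (Nat.coprime_one_left n) hn (one_mul n), setOf_discForm_one,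
    Set.ncard_singleton, one_mul]

end discForm

theorem ncard_discForm_mul {a b : ℕ} [NeZero a] [NeZero b] (hab : a.Coprime b) :
    {x : ZMod (2 * (a * b)) | discForm (a * b) x = 1}.ncard =
      {x : ZMod (2 * a) | discForm a x = 1}.ncard *
        {x : ZMod (2 * b) | discForm b x = 1}.ncard := by
  rcases Nat.even_or_odd b with hb | hb
  · have ha : Odd a := Nat.coprime_two_left.mp (Nat.Coprime.coprime_dvd_left hb.two_dvd hab.symm)
    rw [ncard_discForm_eq_mul hab.symm ha (mul_comm b a), ncard_discForm_of_odd ha, mul_comm]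
  · rw [ncard_discForm_eq_mul hab hb rfl, ncard_discForm_of_odd hb]

theorem ncard_discForm_prime_pow {p e : ℕ} [NeZero (p ^ e)] (hp : p.Prime) (he : e ≠ 0) :
    {x : ZMod (2 * p ^ e) | discForm (p ^ e) x = 1}.ncard = 2 := by
  obtain rfl | hp2 := eq_or_ne p 2
  · have : Fact (2 < 2 * 2 ^ e) := ⟨by have := Nat.one_lt_two_pow he; omega⟩
    rw [Set.ext (discForm_two_pow_eq_one_iff e)]
    exact Set.ncard_pair ZMod.neg_one_ne_one.symm
  · have hodd : Odd (p ^ e) := (hp.odd_of_ne_two hp2).pow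
    have : Fact (2 < p ^ e) :=
      ⟨(lt_of_le_of_ne hp.two_le hp2.symm).trans_le (Nat.le_self_pow he p)⟩
    rw [ncard_discForm_of_odd hodd, Set.ext (ZMod.sq_eq_one_iff_of_prime_pow hp hp2 e)]
    exact Set.ncard_pair ZMod.neg_one_ne_one.symm

theorem ncard_discForm_eq_one (n : ℕ) [NeZero n] :
    {x : ZMod (2 * n) | discForm n x = 1}.ncard = 2 ^ n.primeFactors.card := by
  revert ‹NeZero n›
  induction n using Nat.recOnPosPrimePosCoprime with
  | prime_pow p e hp he =>
    intro
    rw [ncard_discForm_prime_pow hp he.ne', Nat.primeFactors_prime_pow he.ne' hp,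
      Finset.card_singleton, pow_one]
  | zero => intro h; exact (h.out rfl).elim
  | one =>
    intro
    rw [setOf_discForm_one, Set.ncard_singleton, Nat.primeFactors_one, Finset.card_empty, pow_zero]
  | coprime a b ha hb hab iha ihb =>
    intro
    have : NeZero a := ⟨by omega⟩
    have : NeZero b := ⟨by omega⟩
    rw [ncard_discForm_mul hab, iha, ihb, hab.primeFactors_mul,
      Finset.card_union_of_disjoint hab.disjoint_primeFactors, pow_add]

section isometries

open AddAut

variable {n : ℕ} [NeZero n]

theorem mem_isometries_discForm_iff {f : AddAut (ZMod (2 * n))} :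
    f ∈ isometries (discForm n) ↔ discForm n (f 1) = 1 := by
  refine ⟨fun hf => (hf 1).trans (map_one _), fun h x => ?_⟩
  rw [ZMod.addAut_apply_eq_mul f x, map_mul, h, one_mul]

theorem add_self_eq_zero_of_mem_isometries_discForm {f : AddAut (ZMod (2 * n))}
    (hf : f ∈ isometries (discForm n)) : f + f = 0 := by
  have hf1 := mul_self_eq_one_of_discForm_eq_one (mem_isometries_discForm_iff.mp hf)
  ext x
  rw [add_apply, ZMod.addAut_apply_eq_mul f (f x), ZMod.addAut_apply_eq_mul f x, ← mul_assoc, hf1,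
    one_mul, zero_apply]

theorem card_isometries_discForm :
    Nat.card (isometries (discForm n)) = 2 ^ n.primeFactors.card := by
  rw [← ncard_discForm_eq_one n, ← Nat.card_coe_set_eq]
  refine Nat.card_eq_of_bijective (fun f => ⟨f.1 1, mem_isometries_discForm_iff.mp f.2⟩)
    ⟨fun f g hfg => ?_, fun ⟨a, ha⟩ => ?_⟩
  · ext x
    rw [ZMod.addAut_apply_eq_mul f.1 x, ZMod.addAut_apply_eq_mul g.1 x]
    exact congrArg (· * x) (congrArg Subtype.val hfg)
  · have haa := mul_self_eq_one_of_discForm_eq_one ha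
    let u : (ZMod (2 * n))ˣ := ⟨a, a, haa, haa⟩
    have hu : (ZMod.AddAutEquivUnits _).symm (Additive.ofMul u) 1 = a := by simp [u]
    exact ⟨⟨_, mem_isometries_discForm_iff.mpr (hu ▸ ha)⟩, Subtype.ext hu⟩

theorem nonempty_addEquiv_isometries_discForm :
    Nonempty (isometries (discForm n) ≃+ (Fin n.primeFactors.card → ZMod 2)) := by
  -- transported into `Additive (ZMod (2n))ˣ`, the isometries form a commutative group
  let e := (ZMod.AddAutEquivUnits (2 * n)).addSubgroupMap (isometries (discForm n))
  have : Finite (isometries (discForm n)) :=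
    Nat.finite_of_card_ne_zero (by rw [card_isometries_discForm]; positivity)
  have : Finite ((isometries (discForm n)).map (ZMod.AddAutEquivUnits (2 * n)).toAddMonoidHom) :=
    Finite.of_equiv _ e.toEquiv
  have : Fact (Nat.Prime 2) := ⟨Nat.prime_two⟩
  obtain ⟨g⟩ := AddCommGroup.nonempty_addEquiv_fin_pi_zmod (p := 2)
    (fun k => by
      obtain ⟨f, rfl⟩ := e.surjective k
      have hf : f + f = 0 := Subtype.ext (add_self_eq_zero_of_mem_isometries_discForm f.2)
      rw [← map_nsmul, two_nsmul, hf, map_zero])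
    (by rw [← Nat.card_congr e.toEquiv, card_isometries_discForm])
  exact ⟨e.trans g⟩

end isometries

/-- Lemma 3.2: the isometry group of the discriminant form on `Z/2nZ` with
`q(x) = x^2/(2n) mod 2Z` consists of multiplications by `a` with `a^2 ≡ 1 (mod 4n)`,
and is isomorphic to `(Z/2Z)^{ρ(n)}`. -/
theorem stmt_0 (n : ℕ) (hn : 0 < n) :
    (∀ f : AddAut (ZMod (2 * n)),
      (∀ x : ZMod (2 * n), (4 * n : ℤ) ∣ ((f x).val : ℤ) ^ 2 - (x.val : ℤ) ^ 2) →
      ∃ a : ZMod (2 * n), (∀ x, f x = a * x) ∧ (4 * n : ℤ) ∣ (a.val : ℤ) ^ 2 - 1) ∧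
    ∃ H : AddSubgroup (AddAut (ZMod (2 * n))),
      (∀ f, f ∈ H ↔
        ∀ x : ZMod (2 * n), (4 * n : ℤ) ∣ ((f x).val : ℤ) ^ 2 - (x.val : ℤ) ^ 2) ∧
      Nonempty (H ≃+ Additive (Fin n.primeFactors.card → Multiplicative (ZMod 2))) := by
  have : NeZero n := ⟨hn.ne'⟩
  have hval : (1 : ZMod (2 * n)).val = 1 := by
    rw [ZMod.val_one_eq_one_mod, Nat.mod_eq_of_lt (by omega)]
  refine ⟨fun f hf => ⟨f 1, ZMod.addAut_apply_eq_mul f, by simpa [hval] using hf 1⟩,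
    AddAut.isometries (discForm n), fun f => forall_congr' fun x => discForm_eq_iff_dvd x (f x), ?_⟩
  obtain ⟨e⟩ := nonempty_addEquiv_isometries_discForm (n := n)
  exact ⟨e.trans ((AddEquiv.additiveMultiplicative _).symm.trans
    (MulEquiv.toAdditive (MulEquiv.piMultiplicative _)))⟩
end

section
/- Let n be a positive integer. The number of residues a ∈ Z/2nZ satisfying a² ≡ 1 (mod 4n) is 2^{ρ(n)}, where ρ(n) is the number of distinct prime divisors of n. -/
/-!
Writing `a = 2u + 1`, we have `a² - 1 = 4u(u + 1)`, so the admissible `a` correspond to the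
residues `u mod n` with `u(u + 1) ≡ 0`, i.e. to the idempotents `e = u + 1` of `ZMod n`.
By the Chinese remainder theorem these are counted prime power by prime power, and `ZMod (p ^ k)`
is a local ring, whose only idempotents are `0` and `1`.
-/

open Finset

theorem Nat.card_isIdempotentElem_congr {M N : Type*} [Mul M] [Mul N] (e : M ≃* N) :
    Nat.card {x : M // IsIdempotentElem x} = Nat.card {y : N // IsIdempotentElem y} :=
  Nat.card_congr <| e.toEquiv.subtypeEquiv fun x =>
    ⟨fun h => h.map e, fun h => by simpa using h.map e.symm⟩

theorem Nat.card_isIdempotentElem_prod {M N : Type*} [Mul M] [Mul N] :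
    Nat.card {x : M × N // IsIdempotentElem x} =
      Nat.card {x : M // IsIdempotentElem x} * Nat.card {y : N // IsIdempotentElem y} := by
  rw [← Nat.card_prod]
  exact Nat.card_congr <|
    (Equiv.subtypeEquivRight (q := fun x : M × N => IsIdempotentElem x.1 ∧ IsIdempotentElem x.2)
      fun _ => Prod.ext_iff).trans Equiv.subtypeProdEquivProd

namespace IsLocalRing

variable {R : Type*} [CommRing R] [IsLocalRing R]

theorem isIdempotentElem_iff {e : R} : IsIdempotentElem e ↔ e = 0 ∨ e = 1 := by
  refine ⟨fun he => ?_, by rintro (rfl | rfl) <;> simp [IsIdempotentElem]⟩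
  rcases isUnit_or_isUnit_one_sub_self e with hunit | hunit
  · exact .inr ((IsIdempotentElem.iff_eq_one_of_isUnit hunit).1 he)
  · exact .inl (hunit.mul_left_eq_zero.1 he.mul_one_sub_self)

theorem card_isIdempotentElem : Nat.card {e : R // IsIdempotentElem e} = 2 := by
  rw [Nat.card_congr (Equiv.subtypeEquivRight (q := (· ∈ ({0, 1} : Set R)))
    fun _ => isIdempotentElem_iff)]
  exact (Nat.card_coe_set_eq _).trans (Set.ncard_pair zero_ne_one)

end IsLocalRing

namespace ZMod

theorem isLocalRing_prime_pow {p k : ℕ} (hp : p.Prime) (hk : k ≠ 0) :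
    IsLocalRing (ZMod (p ^ k)) := by
  have : NeZero (p ^ k) := ⟨(pow_pos hp.pos k).ne'⟩
  have : Nontrivial (ZMod (p ^ k)) := nontrivial_iff.2 (Nat.one_lt_pow hk hp.one_lt).ne'
  refine IsLocalRing.of_isUnit_or_isUnit_of_isUnit_add fun a b hab => ?_
  rw [← natCast_zmod_val a, ← natCast_zmod_val b] at hab ⊢
  rw [← Nat.cast_add, isUnit_natCast_iff_not_dvd_pow hp (Nat.pos_of_ne_zero hk)] at hab
  simp only [isUnit_natCast_iff_not_dvd_pow hp (Nat.pos_of_ne_zero hk)]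
  by_contra! h
  exact hab (dvd_add h.1 h.2)

theorem card_isIdempotentElem {n : ℕ} (hn : n ≠ 0) :
    Nat.card {e : ZMod n // IsIdempotentElem e} = 2 ^ n.primeFactors.card := by
  induction n using Nat.recOnPosPrimePosCoprime with
  | zero => exact absurd rfl hn
  | one =>
    rw [Nat.primeFactors_one, card_empty, pow_zero, Nat.card_eq_one_iff_unique]
    exact ⟨inferInstance, ⟨⟨0, .zero⟩⟩⟩
  | prime_pow p k hp hk =>
    have := isLocalRing_prime_pow hp hk.ne'
    rw [IsLocalRing.card_isIdempotentElem, Nat.primeFactors_prime_pow hk.ne' hp, card_singleton,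
      pow_one]
  | coprime a b ha hb hab iha ihb =>
    rw [Nat.card_isIdempotentElem_congr (chineseRemainder hab).toMulEquiv,
      Nat.card_isIdempotentElem_prod, iha (by omega), ihb (by omega),
      Nat.Coprime.primeFactors_mul hab, card_union_of_disjoint hab.disjoint_primeFactors, pow_add]

theorem isIdempotentElem_natCast_add_one_iff {n u : ℕ} :
    IsIdempotentElem ((u : ZMod n) + 1) ↔ n ∣ u * (u + 1) := by
  have key : ((u : ZMod n) + 1) * (u + 1) - (u + 1) = ((u * (u + 1) : ℕ) : ZMod n) := by
    push_cast; ring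
  rw [isIdempotentElem_iff, ← sub_eq_zero, key, natCast_eq_zero_iff]

end ZMod

theorem Int.odd_of_two_dvd_sq_sub_one {a : ℤ} (h : 2 ∣ a ^ 2 - 1) : Odd a := by
  simpa [← even_iff_two_dvd, Int.even_sub_one, Int.even_pow, Int.not_even_iff_odd, Int.odd_pow]
    using h

theorem Int.four_mul_dvd_two_mul_add_one_sq_sub_one_iff (n u : ℤ) :
    4 * n ∣ (2 * u + 1) ^ 2 - 1 ↔ n ∣ u * (u + 1) := by
  rw [show (2 * u + 1) ^ 2 - 1 = 4 * (u * (u + 1)) by ring,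
    mul_dvd_mul_iff_left four_ne_zero]

theorem card_filter_four_mul_dvd_sq_sub_one (n : ℕ) [NeZero n] :
    ((range (2 * n)).filter (fun a : ℕ => (4 * n : ℤ) ∣ (a : ℤ) ^ 2 - 1)).card =
      Nat.card {e : ZMod n // IsIdempotentElem e} := by
  classical
  rw [Nat.card_eq_fintype_card, Fintype.card_subtype]
  have two_mul_half_add_one {a : ℕ} (ha : (4 * n : ℤ) ∣ (a : ℤ) ^ 2 - 1) :
      2 * (a / 2) + 1 = a := by
    have := Int.odd_of_two_dvd_sq_sub_one
      ((show (2 : ℤ) ∣ 4 * n from ⟨2 * n, by ring⟩).trans ha)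
    have : a % 2 = 1 := Nat.odd_iff.1 (by exact_mod_cast this)
    omega
  have dvd_iff (u : ℕ) :
      (4 * n : ℤ) ∣ ((2 * u + 1 : ℕ) : ℤ) ^ 2 - 1 ↔
        IsIdempotentElem ((u : ZMod n) + 1) := by
    rw [ZMod.isIdempotentElem_natCast_add_one_iff, ← Int.natCast_dvd_natCast]
    push_cast
    exact Int.four_mul_dvd_two_mul_add_one_sq_sub_one_iff _ _
  refine card_nbij' (fun a => ((a / 2 : ℕ) : ZMod n) + 1) (fun e => 2 * (e - 1).val + 1)
    ?_ ?_ ?_ ?_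
  · intro a ha
    simp only [coe_filter, mem_range, mem_univ, true_and, Set.mem_ofPred_eq] at ha ⊢
    rw [← dvd_iff, two_mul_half_add_one ha.2]
    exact ha.2
  · intro e he
    simp only [coe_filter, mem_range, mem_univ, true_and, Set.mem_ofPred_eq] at he ⊢
    refine ⟨by have := ZMod.val_lt (e - 1); omega, (dvd_iff _).2 ?_⟩
    simpa using he
  · intro a ha
    simp only [coe_filter, mem_range, Set.mem_ofPred_eq] at ha
    dsimp only
    rw [add_sub_cancel_right, ZMod.val_natCast_of_lt (by omega), two_mul_half_add_one ha.2]
  · intro e _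
    dsimp only
    rw [show (2 * (e - 1).val + 1) / 2 = (e - 1).val by omega]
    simp

/-- The number of residues `a ∈ Z/2nZ` with `a² ≡ 1 (mod 4n)` is `2^{ρ(n)}`. -/
theorem stmt_1 (n : ℕ) (hn : 0 < n) :
    ((Finset.range (2 * n)).filter (fun a : ℕ => (4 * n : ℤ) ∣ (a : ℤ) ^ 2 - 1)).card
      = 2 ^ n.primeFactors.card := by
  have : NeZero n := ⟨hn.ne'⟩
  rw [card_filter_four_mul_dvd_sq_sub_one, ZMod.card_isIdempotentElem hn.ne']
end

section
/- Let γ and 2n be positive integers with γ dividing 2n. Write γ = p₁^{α₁} ⋯ p_r^{α_r}. The number of residues modulo γ attained by integers a with a² ≡ 1 (mod 4n) is 2^{ρ̃(γ)}, where ρ̃(γ) = ρ(γ) if γ is odd and ρ(γ/2) if γ is even. -/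
/-!
By the Chinese remainder theorem, an integer `a` with `a² ≡ 1 (mod M)` is a choice of sign
`a ≡ ±1` modulo every prime power `p^e ∥ M`; for `p = 2` the congruence only forces `a ≡ ±1`
modulo `2^(e-1)`, which is enough as soon as `2γ ∣ M`. Hence the residues mod `γ` of such `a`
are exactly the `b` with `b ≡ ±1` modulo every `p^f ∥ γ`, and they are determined by the set of
primes at which the sign is `-1`, taken among the primes at which `1 ≢ -1 (mod p^f)`. These are
all prime factors of `γ` except `2` when `2 ∥ γ`, i.e. the prime factors of `γ / 2` for even `γ`.
-/

open Finset

theorem Prime.pow_dvd_or_pow_dvd_of_dvd_mul {M : Type*} [CommMonoidWithZero M]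
    [IsCancelMulZero M] {p a b : M} (hp : Prime p) (hab : ¬(p ∣ a ∧ p ∣ b)) {n : ℕ}
    (h : p ^ n ∣ a * b) :
    p ^ n ∣ a ∨ p ^ n ∣ b := by
  by_cases ha : p ∣ a
  · exact .inl (hp.pow_dvd_of_dvd_mul_right n (fun hb => hab ⟨ha, hb⟩) h)
  · exact .inr (hp.pow_dvd_of_dvd_mul_left n ha h)

theorem Int.pow_dvd_sub_one_or_add_one_of_two_mul_pow_dvd {p k : ℕ} (hp : p.Prime) {x : ℤ}
    (h : 2 * (p : ℤ) ^ k ∣ x ^ 2 - 1) : (p : ℤ) ^ k ∣ x - 1 ∨ (p : ℤ) ^ k ∣ x + 1 := by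
  rcases hp.eq_two_or_odd' with rfl | hodd
  · push_cast at h ⊢
    rcases k with _ | j
    · simp
    have hx : Odd x := by
      have : Even (x ^ 2 - 1) := even_iff_two_dvd.mpr ((dvd_mul_right _ _).trans h)
      simpa [parity_simps] using this
    obtain ⟨c, rfl⟩ := hx
    have hc : (2 : ℤ) ^ j ∣ c * (c + 1) := by
      have h4 : (4 : ℤ) * 2 ^ j ∣ 4 * (c * (c + 1)) := by
        rwa [show (4 : ℤ) * 2 ^ j = 2 * 2 ^ (j + 1) by ring,
          show 4 * (c * (c + 1)) = (2 * c + 1) ^ 2 - 1 by ring]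
      exact (mul_dvd_mul_iff_left (by norm_num)).mp h4
    have hcop : ¬((2 : ℤ) ∣ c ∧ (2 : ℤ) ∣ c + 1) := fun ⟨h1, h2⟩ => by omega
    rcases Int.prime_two.pow_dvd_or_pow_dvd_of_dvd_mul hcop hc with hc | hc
    · exact .inl (by rw [pow_succ']; exact (mul_dvd_mul_left 2 hc).trans ⟨1, by ring⟩)
    · exact .inr (by rw [pow_succ']; exact (mul_dvd_mul_left 2 hc).trans ⟨1, by ring⟩)
  · have hpZ : Prime (p : ℤ) := Nat.prime_iff_prime_int.mp hp
    have hpk : (p : ℤ) ^ k ∣ (x - 1) * (x + 1) := by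
      rw [show (x - 1) * (x + 1) = x ^ 2 - 1 by ring]
      exact (dvd_mul_left _ _).trans h
    refine hpZ.pow_dvd_or_pow_dvd_of_dvd_mul (fun ⟨h1, h2⟩ => ?_) hpk
    have h2 : p ∣ 2 := by exact_mod_cast (show (p : ℤ) ∣ 2 by simpa using dvd_sub h2 h1)
    obtain rfl := (Nat.prime_dvd_prime_iff_eq hp Nat.prime_two).mp h2
    exact absurd hodd (by decide)

theorem Int.exists_forall_ordProj_dvd_sub (m : ℕ) (r : ℕ → ℤ) :
    ∃ a : ℤ, ∀ p ∈ m.primeFactors, (ordProj[p] m : ℤ) ∣ a - r p := by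
  have hprime : ∀ p ∈ m.primeFactors, Prime (Ideal.span {(p : ℤ)}) := fun p hp => by
    have hpZ := Nat.prime_iff_prime_int.mp (Nat.prime_of_mem_primeFactors hp)
    exact Ideal.prime_of_isPrime (by simpa using hpZ.ne_zero)
      ((Ideal.span_singleton_prime hpZ.ne_zero).mpr hpZ)
  obtain ⟨a, ha⟩ := IsDedekindDomain.exists_forall_sub_mem_ideal (s := m.primeFactors)
    (fun p => Ideal.span {(p : ℤ)}) m.factorization hprime
    (fun p hp q _ hpq => by
      simp [Ideal.span_singleton_eq_span_singleton, Int.associated_iff, hpq,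
        (Nat.prime_of_mem_primeFactors hp).ne_zero]) (fun p => r p)
  refine ⟨a, fun p hp => ?_⟩
  simpa [Ideal.span_singleton_pow, Ideal.mem_span_singleton] using ha p hp

theorem Int.natCast_dvd_of_forall_ordProj_dvd {m : ℕ} (hm : m ≠ 0) {x : ℤ}
    (h : ∀ p ∈ m.primeFactors, (ordProj[p] m : ℤ) ∣ x) : (m : ℤ) ∣ x := by
  rw [Int.natCast_dvd, Nat.dvd_iff_prime_pow_dvd_dvd]
  intro p k hp hpk
  rcases k.eq_zero_or_pos with rfl | hk
  · simp
  have hpm : p ∈ m.primeFactors :=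
    Nat.mem_primeFactors.mpr ⟨hp, (dvd_pow_self p hk.ne').trans hpk, hm⟩
  exact ((hp.pow_dvd_iff_dvd_ordProj hm).mp hpk).trans (Int.natCast_dvd.mp (h p hpm))

theorem Nat.ordProj_dvd_two_iff {p m : ℕ} (hp : p ∈ m.primeFactors) :
    ordProj[p] m ∣ 2 ↔ p = 2 ∧ m.factorization 2 = 1 := by
  obtain ⟨hp, hpm, hm⟩ := Nat.mem_primeFactors.mp hp
  have hv := hp.factorization_pos_of_dvd hm hpm
  constructor
  · intro h
    obtain rfl : p = 2 := (Nat.prime_dvd_prime_iff_eq hp Nat.prime_two).mp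
      ((Nat.dvd_ordProj_of_dvd hm hp hpm).trans h)
    have h' : 2 ^ m.factorization 2 ∣ 2 ^ 1 := h
    rw [Nat.pow_dvd_pow_iff_le_right (by norm_num)] at h'
    exact ⟨rfl, by omega⟩
  · rintro ⟨rfl, h⟩
    rw [h, pow_one]

-- The prime factors `p` of `m` modulo whose full power in `m` we have `1 ≠ -1`.
def signPrimes (m : ℕ) : Finset ℕ := {p ∈ m.primeFactors | ¬ordProj[p] m ∣ 2}

theorem signPrimes_eq (m : ℕ) :
    signPrimes m = if 2 ∣ m then (m / 2).primeFactors else m.primeFactors := by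
  ext p
  simp only [signPrimes, mem_filter]
  rw [and_congr_right_iff.mpr fun hp => not_congr (Nat.ordProj_dvd_two_iff hp)]
  split_ifs with h2
  · obtain ⟨k, rfl⟩ := h2
    rcases eq_or_ne k 0 with rfl | hk
    · simp
    have h2k : 2 ∈ k.primeFactors ↔ k.factorization 2 ≠ 0 := by
      rw [← Nat.support_factorization, Finsupp.mem_support_iff]
    rw [Nat.mul_div_cancel_left k two_pos, Nat.primeFactors_mul two_ne_zero hk,
      Nat.factorization_mul two_ne_zero hk, Nat.Prime.primeFactors Nat.prime_two]
    simp only [mem_union, mem_singleton, Finsupp.add_apply,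
      Nat.Prime.factorization_self Nat.prime_two]
    grind
  · refine ⟨fun h => h.1, fun h => ⟨h, ?_⟩⟩
    rintro ⟨rfl, -⟩
    exact h2 (Nat.dvd_of_mem_primeFactors h)

open Classical in
noncomputable def sqrtOneResidues (M γ : ℕ) : Finset ℕ :=
  {b ∈ range γ | ∃ a : ℤ, (M : ℤ) ∣ a ^ 2 - 1 ∧ (γ : ℤ) ∣ a - b}

def negPrimes (γ : ℕ) (b : ℤ) : Finset ℕ :=
  {p ∈ signPrimes γ | (ordProj[p] γ : ℤ) ∣ b + 1}

section
variable {M γ : ℕ}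

theorem mem_sqrtOneResidues {b : ℕ} :
    b ∈ sqrtOneResidues M γ ↔ b < γ ∧ ∃ a : ℤ, (M : ℤ) ∣ a ^ 2 - 1 ∧ (γ : ℤ) ∣ a - b := by
  classical
  simp [sqrtOneResidues]

theorem ordProj_dvd_sub_one_or_add_one_of_mem_sqrtOneResidues (hM : 2 * γ ∣ M) {b : ℕ}
    (hb : b ∈ sqrtOneResidues M γ) {p : ℕ} (hp : p ∈ γ.primeFactors) :
    (ordProj[p] γ : ℤ) ∣ b - 1 ∨ (ordProj[p] γ : ℤ) ∣ b + 1 := by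
  obtain ⟨-, a, ha, hab⟩ := mem_sqrtOneResidues.mp hb
  have hpγ : (ordProj[p] γ : ℤ) ∣ γ := Int.natCast_dvd_natCast.mpr (Nat.ordProj_dvd γ p)
  have h2 : 2 * (p : ℤ) ^ γ.factorization p ∣ a ^ 2 - 1 :=
    (Int.natCast_dvd_natCast.mpr (mul_dvd_mul_left 2 (Nat.ordProj_dvd γ p) |>.trans hM)).trans
      (by exact_mod_cast ha)
  rcases Int.pow_dvd_sub_one_or_add_one_of_two_mul_pow_dvd (Nat.prime_of_mem_primeFactors hp) h2
    with h | h
  · left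
    rw [show (b : ℤ) - 1 = a - 1 - (a - b) by ring]
    exact dvd_sub h (hpγ.trans hab)
  · right
    rw [show (b : ℤ) + 1 = a + 1 - (a - b) by ring]
    exact dvd_sub h (hpγ.trans hab)

theorem ordProj_dvd_sub_one_of_notMem_negPrimes {b : ℤ} {p : ℕ} (hp : p ∈ γ.primeFactors)
    (hb : (ordProj[p] γ : ℤ) ∣ b - 1 ∨ (ordProj[p] γ : ℤ) ∣ b + 1)
    (hneg : p ∉ negPrimes γ b) :
    (ordProj[p] γ : ℤ) ∣ b - 1 := by
  rcases hb with hb | hb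
  · exact hb
  · have h2 : ordProj[p] γ ∣ 2 := by
      by_contra h2
      exact hneg (mem_filter.mpr ⟨mem_filter.mpr ⟨hp, h2⟩, hb⟩)
    rw [show b - 1 = b + 1 - 2 by ring]
    exact dvd_sub hb (by exact_mod_cast h2)

theorem eq_of_negPrimes_eq (hM : 2 * γ ∣ M) {b b' : ℕ} (hb : b ∈ sqrtOneResidues M γ)
    (hb' : b' ∈ sqrtOneResidues M γ) (h : negPrimes γ b = negPrimes γ b') : b = b' := by
  have hbγ := (mem_sqrtOneResidues.mp hb).1
  have hdvd : (γ : ℤ) ∣ (b' : ℤ) - b := by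
    refine Int.natCast_dvd_of_forall_ordProj_dvd (by omega) fun p hp => ?_
    have sign {c : ℕ} (hc : c ∈ sqrtOneResidues M γ) :=
      ordProj_dvd_sub_one_or_add_one_of_mem_sqrtOneResidues hM hc hp
    by_cases hneg : p ∈ negPrimes γ b
    · have h1 := (mem_filter.mp hneg).2
      have h1' := (mem_filter.mp (h ▸ hneg)).2
      simpa using dvd_sub h1' h1
    · have h1 := ordProj_dvd_sub_one_of_notMem_negPrimes hp (sign hb) hneg
      have h1' := ordProj_dvd_sub_one_of_notMem_negPrimes hp (sign hb') (h ▸ hneg)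
      simpa using dvd_sub h1' h1
  exact (Nat.modEq_iff_dvd.mpr hdvd).eq_of_lt_of_lt hbγ (mem_sqrtOneResidues.mp hb').1

theorem exists_mem_sqrtOneResidues_negPrimes_eq (hM0 : M ≠ 0) (hM : γ ∣ M) {P : Finset ℕ}
    (hP : P ⊆ signPrimes γ) : ∃ b ∈ sqrtOneResidues M γ, negPrimes γ b = P := by
  have hγ : (0 : ℤ) < γ := by
    have := ne_zero_of_dvd_ne_zero hM0 hM
    positivity
  set r : ℕ → ℤ := fun p => if p ∈ P then -1 else 1 with hr
  obtain ⟨a, ha⟩ := Int.exists_forall_ordProj_dvd_sub M r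
  have haM : (M : ℤ) ∣ a ^ 2 - 1 := by
    refine Int.natCast_dvd_of_forall_ordProj_dvd hM0 fun p hp => (ha p hp).trans ⟨a + r p, ?_⟩
    by_cases hpP : p ∈ P <;> simp [hr, hpP] <;> ring
  set b := (a % γ).toNat
  have hb : (b : ℤ) = a % γ := Int.toNat_of_nonneg (Int.emod_nonneg _ hγ.ne')
  have hab : (γ : ℤ) ∣ a - b := by
    rw [hb]
    exact (Int.mod_modEq a γ).dvd
  have hbr : ∀ p ∈ γ.primeFactors, (ordProj[p] γ : ℤ) ∣ b - r p := fun p hp => by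
    have hpM : (ordProj[p] γ : ℤ) ∣ ordProj[p] M := by
      exact_mod_cast Nat.ordProj_dvd_ordProj_of_dvd hM0 hM p
    have hpγ : (ordProj[p] γ : ℤ) ∣ γ := Int.natCast_dvd_natCast.mpr (Nat.ordProj_dvd γ p)
    rw [show (b : ℤ) - r p = a - r p - (a - b) by ring]
    exact dvd_sub (hpM.trans (ha p (Nat.primeFactors_mono hM hM0 hp))) (hpγ.trans hab)
  have hbγ : b < γ := by
    have := Int.emod_lt_of_pos a hγ
    omega
  refine ⟨b, mem_sqrtOneResidues.mpr ⟨hbγ, a, haM, hab⟩, ?_⟩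
  ext p
  simp only [negPrimes, mem_filter]
  constructor
  · rintro ⟨hpS, hdvd⟩
    by_contra hpP
    have hsub := hbr p (mem_filter.mp hpS).1
    simp only [hr, hpP, if_false] at hsub
    have h2 : (ordProj[p] γ : ℤ) ∣ 2 := by simpa using dvd_sub hdvd hsub
    exact (mem_filter.mp hpS).2 (by exact_mod_cast h2)
  · intro hpP
    refine ⟨hP hpP, ?_⟩
    simpa [hr, hpP] using hbr p (mem_filter.mp (hP hpP)).1

theorem card_sqrtOneResidues (hM0 : M ≠ 0) (hM : 2 * γ ∣ M) :
    (sqrtOneResidues M γ).card = 2 ^ (signPrimes γ).card := by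
  rw [← card_powerset]
  refine card_bij (fun b _ => negPrimes γ b) (fun b _ => mem_powerset.mpr (filter_subset _ _))
    (fun b hb b' hb' h => eq_of_negPrimes_eq hM hb hb' h) fun P hP => ?_
  obtain ⟨b, hb, rfl⟩ := exists_mem_sqrtOneResidues_negPrimes_eq hM0
    ((dvd_mul_left γ 2).trans hM) (mem_powerset.mp hP)
  exact ⟨b, hb, rfl⟩

end

theorem image_mod_eq_sqrtOneResidues {n γ : ℕ} (hn : 0 < n) (hdvd : γ ∣ 2 * n) :
    ((range (2 * n)).filter (fun a : ℕ => (4 * n : ℤ) ∣ (a : ℤ) ^ 2 - 1)).image (· % γ) =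
      sqrtOneResidues (4 * n) γ := by
  have hγ : 0 < γ := Nat.pos_of_dvd_of_pos hdvd (by omega)
  ext b
  simp only [mem_image, mem_filter, mem_range, mem_sqrtOneResidues]
  push_cast
  constructor
  · rintro ⟨a, ⟨-, ha⟩, rfl⟩
    refine ⟨Nat.mod_lt _ hγ, a, ha, ?_⟩
    push_cast
    exact (Int.mod_modEq _ _).dvd
  · rintro ⟨hb, a, ha, hab⟩
    have h2n : (0 : ℤ) < 2 * n := by positivity
    have hc0 : 0 ≤ a % (2 * n) := Int.emod_nonneg _ h2n.ne'
    have hc2n : a % (2 * n) < 2 * n := Int.emod_lt_of_pos _ h2n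
    refine ⟨(a % (2 * n)).toNat, ⟨by omega, ?_⟩, ?_⟩
    · rw [Int.toNat_of_nonneg hc0, Int.emod_def, show (a - 2 * n * (a / (2 * n))) ^ 2 - 1 =
        a ^ 2 - 1 - 4 * n * (a / (2 * n) * (a - n * (a / (2 * n)))) by ring]
      exact dvd_sub ha (dvd_mul_right _ _)
    · have : (((a % (2 * n)).toNat % γ : ℕ) : ℤ) = b := by
        push_cast
        rw [Int.toNat_of_nonneg hc0, Int.emod_emod_of_dvd _ (by exact_mod_cast hdvd)]
        rw [show a % γ = b % γ from (Int.modEq_iff_dvd.mpr hab).symm]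
        exact Int.emod_eq_of_lt (by positivity) (by omega)
      exact_mod_cast this

theorem stmt_3_general (n γ : ℕ) (hn : 0 < n) (hdvd : γ ∣ 2 * n) :
    (((Finset.range (2 * n)).filter
        (fun a : ℕ => (4 * n : ℤ) ∣ (a : ℤ) ^ 2 - 1)).image (· % γ)).card
      = 2 ^ (if 2 ∣ γ then (γ / 2).primeFactors.card else γ.primeFactors.card) := by
  have h2γ : 2 * γ ∣ 4 * n := by
    rw [show 4 * n = 2 * (2 * n) by ring]
    exact mul_dvd_mul_left 2 hdvd
  rw [image_mod_eq_sqrtOneResidues hn hdvd, card_sqrtOneResidues (by omega) h2γ, signPrimes_eq,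
    apply_ite Finset.card]

/-- The number of residues modulo `γ` attained by integers `a` with `a² ≡ 1 (mod 4n)`
(where `γ ∣ 2n`) is `2^{ρ̃(γ)}`. -/
theorem stmt_3 (n γ : ℕ) (hn : 0 < n) (hγ : 0 < γ) (hdvd : γ ∣ 2 * n) :
    (((Finset.range (2 * n)).filter
        (fun a : ℕ => (4 * n : ℤ) ∣ (a : ℤ) ^ 2 - 1)).image (· % γ)).card
      = 2 ^ (if 2 ∣ γ then (γ / 2).primeFactors.card else γ.primeFactors.card) :=
  stmt_3_general n γ hn hdvd
end

section
/- Let m̃, n, γ be positive integers with γ dividing gcd(2m̃, 2n) and γ ≥ 2. There exists an integer b coprime to γ with γ² dividing b²m̃ + n if and only if for every prime p dividing γ, setting α = min(v_p(m̃), v_p(n)) and β = v_p(γ): either v_p(m̃) ≠ v_p(n) and β ≤ α/2, or v_p(m̃) = v_p(n) = α and (β ≤ α/2, or β > α/2 and −n/m̃ (after dividing both by p^α) is a square modulo p^{2β−α}). -/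
/-!
The problem is local: a solution for `γ` is a solution for every `p ^ β ∥ γ`, and solutions for
the prime-power parts glue by the Chinese remainder theorem. For `γ = p ^ β` put
`α = min (v_p m̃) (v_p n)`. If `2β ≤ α` then `b = 1` works. Otherwise `p ∤ b`, so `p ^ (α + 1)`
divides `b²m̃ + n` only if it divides both or neither of `m̃` and `n`; this rules out
`v_p m̃ ≠ v_p n`. When `v_p m̃ = v_p n = α`, cancelling `p ^ α` leaves the congruence
`x²m̃₀ + n₀ ≡ 0 (mod p ^ (2β - α))`, and any solution `x` is prime to `p` because `p ∤ n₀`.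
-/

namespace Int

theorem exists_modEq_and_modEq_of_isCoprime {N M : ℤ} (h : IsCoprime N M) (a b : ℤ) :
    ∃ x, x ≡ a [ZMOD N] ∧ x ≡ b [ZMOD M] := by
  obtain ⟨u, v, huv⟩ := h
  refine ⟨a * (v * M) + b * (u * N), ?_, ?_⟩ <;> rw [Int.modEq_iff_dvd]
  · exact ⟨(a - b) * u, by linear_combination (-a) * huv⟩
  · exact ⟨(b - a) * v, by linear_combination (-b) * huv⟩

theorem ModEq.isCoprime_iff {a b N : ℤ} (h : a ≡ b [ZMOD N]) :
    IsCoprime a N ↔ IsCoprime b N := by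
  obtain ⟨k, hk⟩ := Int.modEq_iff_dvd.mp h
  rw [show b = a + N * k by linarith, IsCoprime.add_mul_left_left_iff]

end Int

theorem dvd_iff_dvd_of_dvd_sq_mul_add {b d m n : ℤ} (hb : IsCoprime b d)
    (h : d ∣ b ^ 2 * m + n) : d ∣ m ↔ d ∣ n :=
  ⟨fun hm => (dvd_add_right (dvd_mul_of_dvd_right hm _)).mp h,
    fun hn => hb.symm.pow_right.dvd_of_dvd_mul_left ((dvd_add_left hn).mp h)⟩

theorem isCoprime_of_dvd_sq_mul_add {x d m n : ℤ} (hn : IsCoprime n d)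
    (h : d ∣ x ^ 2 * m + n) : IsCoprime x d := by
  obtain ⟨k, hk⟩ := h
  rw [show n = -(x ^ 2 * m) + d * k by linarith, IsCoprime.add_mul_left_left_iff,
    IsCoprime.neg_left_iff] at hn
  exact (IsCoprime.pow_left_iff two_pos).mp hn.of_mul_left_left

def HasCoprimeSolution (m n γ : ℤ) : Prop :=
  ∃ b : ℤ, IsCoprime b γ ∧ γ ^ 2 ∣ b ^ 2 * m + n

namespace HasCoprimeSolution

variable {m n : ℤ}

theorem of_sq_dvd {γ : ℤ} (hm : γ ^ 2 ∣ m) (hn : γ ^ 2 ∣ n) : HasCoprimeSolution m n γ :=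
  ⟨1, isCoprime_one_left, by simpa using dvd_add hm hn⟩

theorem of_dvd {d γ : ℤ} (hd : d ∣ γ) (h : HasCoprimeSolution m n γ) :
    HasCoprimeSolution m n d :=
  let ⟨b, hb, hγ⟩ := h
  ⟨b, hb.of_isCoprime_of_dvd_right hd, (pow_dvd_pow_of_dvd hd 2).trans hγ⟩

theorem mul {N M : ℤ} (hNM : IsCoprime N M) (hN : HasCoprimeSolution m n N)
    (hM : HasCoprimeSolution m n M) : HasCoprimeSolution m n (N * M) := by
  obtain ⟨b₁, hb₁, hN⟩ := hN
  obtain ⟨b₂, hb₂, hM⟩ := hM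
  obtain ⟨b, h₁, h₂⟩ := Int.exists_modEq_and_modEq_of_isCoprime hNM.pow b₁ b₂
  have hcop₁ : IsCoprime b N := ((h₁.of_dvd (dvd_pow_self N two_ne_zero)).isCoprime_iff).mpr hb₁
  have hcop₂ : IsCoprime b M := ((h₂.of_dvd (dvd_pow_self M two_ne_zero)).isCoprime_iff).mpr hb₂
  refine ⟨b, hcop₁.mul_right hcop₂, ?_⟩
  rw [mul_pow]
  exact hNM.pow.mul_dvd ((((h₁.pow 2).mul_right m).add_right n).dvd_iff.mpr hN)
    ((((h₂.pow 2).mul_right m).add_right n).dvd_iff.mpr hM)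

theorem prod {ι : Type*} {s : Finset ι} {f : ι → ℤ}
    (hf : (s : Set ι).Pairwise (Function.onFun IsCoprime f))
    (h : ∀ i ∈ s, HasCoprimeSolution m n (f i)) : HasCoprimeSolution m n (∏ i ∈ s, f i) := by
  classical
  induction s using Finset.induction_on with
  | empty => exact of_sq_dvd (by simp) (by simp)
  | insert i s hi ih =>
    rw [Finset.prod_insert hi]
    refine mul (IsCoprime.prod_right fun j hj => ?_) (h i (by simp))
      (ih (hf.mono (by simp)) fun j hj => h j (by simp [hj]))
    exact hf (by simp) (by simp [hj]) (by rintro rfl; exact hi hj)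

end HasCoprimeSolution

theorem hasCoprimeSolution_iff_forall_prime {m n : ℤ} {γ : ℕ} (hγ : γ ≠ 0) :
    HasCoprimeSolution m n γ ↔
      ∀ p : ℕ, p.Prime → p ∣ γ → HasCoprimeSolution m n ((p : ℤ) ^ γ.factorization p) := by
  refine ⟨fun h p _ _ => h.of_dvd (by exact_mod_cast Nat.ordProj_dvd γ p), fun h => ?_⟩
  have hγ_eq : (γ : ℤ) = ∏ p ∈ γ.primeFactors, (p : ℤ) ^ γ.factorization p := by
    conv_lhs => rw [← Nat.prod_factorization_pow_eq_self hγ]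
    simp [Finsupp.prod]
  rw [hγ_eq]
  refine HasCoprimeSolution.prod (fun p hp q hq hpq => ?_) fun p hp =>
    h p (Nat.prime_of_mem_primeFactors hp) (Nat.dvd_of_mem_primeFactors hp)
  have := (Nat.coprime_primes (Nat.prime_of_mem_primeFactors hp)
    (Nat.prime_of_mem_primeFactors hq)).mpr hpq
  simp only [Function.onFun]
  exact_mod_cast Nat.isCoprime_iff_coprime.mpr (this.pow _ _)

section PrimePower

variable {p m n β : ℕ}

theorem hasCoprimeSolution_prime_pow_of_le (hp : p.Prime) (hm : m ≠ 0) (hn : n ≠ 0)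
    (h : 2 * β ≤ min (m.factorization p) (n.factorization p)) :
    HasCoprimeSolution m n ((p : ℤ) ^ β) := by
  have hdvd : ∀ k : ℕ, k ≠ 0 → 2 * β ≤ k.factorization p → ((p : ℤ) ^ β) ^ 2 ∣ k :=
    fun k hk hle => by
      rw [← pow_mul, mul_comm]
      exact_mod_cast (hp.pow_dvd_iff_le_factorization hk).mpr hle
  exact .of_sq_dvd (hdvd m hm (by omega)) (hdvd n hn (by omega))

theorem not_hasCoprimeSolution_prime_pow (hp : p.Prime) (hm : m ≠ 0) (hn : n ≠ 0)
    (hmn : m.factorization p ≠ n.factorization p)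
    (h : min (m.factorization p) (n.factorization p) < 2 * β) :
    ¬ HasCoprimeSolution m n ((p : ℤ) ^ β) := by
  rintro ⟨b, hb, hdvd⟩
  set α := min (m.factorization p) (n.factorization p)
  have hbp : IsCoprime b ((p : ℤ) ^ (α + 1)) :=
    (IsCoprime.pow_right_iff (by omega)).mpr ((IsCoprime.pow_right_iff (by omega)).mp hb)
  have hα : (p : ℤ) ^ (α + 1) ∣ b ^ 2 * m + n := by
    rw [← pow_mul] at hdvd
    exact (pow_dvd_pow _ (by omega)).trans hdvd
  have key := dvd_iff_dvd_of_dvd_sq_mul_add hbp hα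
  norm_cast at key
  rw [hp.pow_dvd_iff_le_factorization hm, hp.pow_dvd_iff_le_factorization hn] at key
  omega

theorem hasCoprimeSolution_prime_pow_iff_of_factorization_eq {α : ℕ} (hp : p.Prime) (hn : n ≠ 0)
    (hmα : m.factorization p = α) (hnα : n.factorization p = α) (h : α < 2 * β) :
    HasCoprimeSolution m n ((p : ℤ) ^ β) ↔
      ∃ x : ℤ, (p : ℤ) ^ (2 * β - α) ∣ x ^ 2 * ((m / p ^ α : ℕ) : ℤ) + ((n / p ^ α : ℕ) : ℤ) := by
  have hsplit : ∀ k : ℕ, k.factorization p = α → (k : ℤ) = p ^ α * ((k / p ^ α : ℕ) : ℤ) :=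
    fun k hk => by exact_mod_cast (hk ▸ Nat.ordProj_mul_ordCompl_eq_self k p).symm
  have hcancel : ∀ x : ℤ, ((p : ℤ) ^ β) ^ 2 ∣ x ^ 2 * m + n ↔
      (p : ℤ) ^ (2 * β - α) ∣ x ^ 2 * ((m / p ^ α : ℕ) : ℤ) + ((n / p ^ α : ℕ) : ℤ) := by
    intro x
    rw [← pow_mul, show β * 2 = α + (2 * β - α) by omega, pow_add, hsplit m hmα, hsplit n hnα,
      show x ^ 2 * (p ^ α * ((m / p ^ α : ℕ) : ℤ)) + p ^ α * ((n / p ^ α : ℕ) : ℤ) =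
        p ^ α * (x ^ 2 * ((m / p ^ α : ℕ) : ℤ) + ((n / p ^ α : ℕ) : ℤ)) by ring,
      mul_dvd_mul_iff_left (pow_ne_zero _ (by exact_mod_cast hp.ne_zero))]
  have hn₀ : IsCoprime ((n / p ^ α : ℕ) : ℤ) p := by
    have := Nat.coprime_ordCompl hp hn
    rw [hnα] at this
    exact_mod_cast Nat.isCoprime_iff_coprime.mpr this.symm
  refine ⟨fun ⟨b, _, hb⟩ => ⟨b, (hcancel b).mp hb⟩, fun ⟨x, hx⟩ => ⟨x, ?_, (hcancel x).mpr hx⟩⟩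
  have hxp : IsCoprime x p :=
    isCoprime_of_dvd_sq_mul_add hn₀ ((dvd_pow_self _ (by omega)).trans hx)
  exact (IsCoprime.pow_right_iff (by omega)).mpr hxp

theorem hasCoprimeSolution_prime_pow_iff (hp : p.Prime) (hm : m ≠ 0) (hn : n ≠ 0) :
    HasCoprimeSolution m n ((p : ℤ) ^ β) ↔
      ((m.factorization p ≠ n.factorization p ∧
          2 * β ≤ min (m.factorization p) (n.factorization p)) ∨
       (m.factorization p = n.factorization p ∧
          (2 * β ≤ min (m.factorization p) (n.factorization p) ∨
           (2 * β > min (m.factorization p) (n.factorization p) ∧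
            ∃ x : ℤ,
              (p : ℤ) ^ (2 * β - min (m.factorization p) (n.factorization p)) ∣
                x ^ 2 * ((m / p ^ min (m.factorization p) (n.factorization p) : ℕ) : ℤ)
                  + ((n / p ^ min (m.factorization p) (n.factorization p) : ℕ) : ℤ))))) := by
  by_cases hle : 2 * β ≤ min (m.factorization p) (n.factorization p)
  · exact iff_of_true (hasCoprimeSolution_prime_pow_of_le hp hm hn hle) (by tauto)
  by_cases hmn : m.factorization p = n.factorization p
  · rw [hasCoprimeSolution_prime_pow_iff_of_factorization_eq
      (α := min (m.factorization p) (n.factorization p)) hp hn (by omega)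
      (by omega) (by omega)]
    have hgt := not_le.mp hle
    tauto
  · exact iff_of_false (not_hasCoprimeSolution_prime_pow hp hm hn hmn (by omega)) (by tauto)

end PrimePower

theorem stmt_4_general (mt n γ : ℕ) (hmt : 0 < mt) (hn : 0 < n) (hγ : 2 ≤ γ) :
    (∃ b : ℤ, IsCoprime b (γ : ℤ) ∧ (γ : ℤ) ^ 2 ∣ b ^ 2 * mt + n) ↔
      ∀ p : ℕ, p.Prime → p ∣ γ →
        ((mt.factorization p ≠ n.factorization p ∧
            2 * γ.factorization p ≤ min (mt.factorization p) (n.factorization p)) ∨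
         (mt.factorization p = n.factorization p ∧
            (2 * γ.factorization p ≤ min (mt.factorization p) (n.factorization p) ∨
             (2 * γ.factorization p > min (mt.factorization p) (n.factorization p) ∧
              ∃ x : ℤ,
                (p : ℤ) ^ (2 * γ.factorization p
                    - min (mt.factorization p) (n.factorization p)) ∣
                  x ^ 2 * ((mt / p ^ min (mt.factorization p) (n.factorization p) : ℕ) : ℤ)
                    + ((n / p ^ min (mt.factorization p) (n.factorization p) : ℕ) : ℤ))))) := by
  have hγ₀ : γ ≠ 0 := by omega
  refine (hasCoprimeSolution_iff_forall_prime hγ₀).trans <|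
    forall_congr' fun p => forall_congr' fun hp => forall_congr' fun _ => ?_
  exact hasCoprimeSolution_prime_pow_iff hp hmt.ne' hn.ne'

/-- Existence criterion for `b` coprime to `γ` with `γ² ∣ b²m̃ + n`
(Proposition 3.5, existence part). Here `mt` plays the role of `m̃`. -/
theorem stmt_4 (mt n γ : ℕ) (hmt : 0 < mt) (hn : 0 < n) (hγ : 2 ≤ γ)
    (hdvd : γ ∣ Nat.gcd (2 * mt) (2 * n)) :
    (∃ b : ℤ, IsCoprime b (γ : ℤ) ∧ (γ : ℤ) ^ 2 ∣ b ^ 2 * mt + n) ↔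
      ∀ p : ℕ, p.Prime → p ∣ γ →
        ((mt.factorization p ≠ n.factorization p ∧
            2 * γ.factorization p ≤ min (mt.factorization p) (n.factorization p)) ∨
         (mt.factorization p = n.factorization p ∧
            (2 * γ.factorization p ≤ min (mt.factorization p) (n.factorization p) ∨
             (2 * γ.factorization p > min (mt.factorization p) (n.factorization p) ∧
              ∃ x : ℤ,
                (p : ℤ) ^ (2 * γ.factorization p
                    - min (mt.factorization p) (n.factorization p)) ∣
                  x ^ 2 * ((mt / p ^ min (mt.factorization p) (n.factorization p) : ℕ) : ℤ)
                    + ((n / p ^ min (mt.factorization p) (n.factorization p) : ℕ) : ℤ))))) :=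
  stmt_4_general mt n γ hmt hn hγ
end

section
/- Let Λ̃ = Λ₀ ⊕ U where Λ₀ is an even unimodular lattice and U is the hyperbolic plane with basis u₁, u₂. Fix m̃ ≥ 1, set v = u₁ + m̃u₂, δ = u₁ − m̃u₂, and Λ = v^⊥ = Λ₀ ⊕ Zδ. Let κ ∈ Λ be primitive with κ² = 2l and κ_* = kδ_* in D(Λ) ≅ Z/2m̃Z with |k| ≤ m̃, and set d = gcd(2m̃, k). Then there is a unique integer c with l = c(2m̃/d)² − m̃(k/d)². -/
/-!
Write `κ = (x, a, b)` and `κ/γ - kδ/2m̃ = (y, s, t) ∈ Λ`; orthogonality to `v` gives `b = -m̃a`, so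
`κ² = x² - 2m̃a²`. With `N = 2m̃/d` and `k' = k/d`, the `u₁`-coordinate reads `γ(k' + Ns) = Na`; as
`N` and `k'` are coprime, `γ = Ng`, and then `κ = g • (N y, k' + Ns, ⋯)`, so `g = ±1` by
primitivity. Hence `κ² = N²y² - 2m̃(k' + Ns)²`, and since `y²` is even and `2m̃ = dN`, this is
`2(cN² - m̃k'²)` for an integer `c`, unique because `N ≠ 0`.
-/

theorem IsCoprime.exists_eq_mul_of_mul_add_mul_eq {R : Type*} [CommRing R] [IsDomain R]
    {N k γ a s : R} (hcop : IsCoprime N k) (hN : N ≠ 0) (h : γ * (k + N * s) = N * a) :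
    ∃ g, γ = N * g ∧ a = g * (k + N * s) := by
  obtain ⟨g, rfl⟩ : N ∣ γ :=
    (hcop.add_mul_left_right s).dvd_of_dvd_mul_right ⟨a, h⟩
  refine ⟨g, rfl, mul_left_cancel₀ hN ?_⟩
  linear_combination -h

theorem Int.exists_eq_ediv_gcd_mul_of_mul_sub_mul_eq {n k γ a s : ℤ} (hn : n ≠ 0)
    (h : n * a - k * γ = n * γ * s) :
    ∃ g, γ = n / n.gcd k * g ∧ a = g * (k / n.gcd k + n / n.gcd k * s) := by
  have hpos : 0 < n.gcd k := Int.gcd_pos_of_ne_zero_left k hn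
  have hdn : (n.gcd k : ℤ) * (n / n.gcd k) = n := Int.mul_ediv_cancel' (Int.gcd_dvd_left _ _)
  have hdk : (n.gcd k : ℤ) * (k / n.gcd k) = k := Int.mul_ediv_cancel' (Int.gcd_dvd_right _ _)
  refine (Int.isCoprime_iff_gcd_eq_one.mpr (Int.gcd_div_gcd_div_gcd hpos))
    |>.exists_eq_mul_of_mul_add_mul_eq (right_ne_zero_of_mul (hdn ▸ hn)) ?_
  refine mul_left_cancel₀ (by positivity : (n.gcd k : ℤ) ≠ 0) ?_
  linear_combination -h + (γ * s - a) * hdn + γ * hdk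

theorem LinearMap.apply_zsmul_zsmul {M : Type*} [AddCommGroup M] [Module ℤ M]
    (B : M →ₗ[ℤ] M →ₗ[ℤ] ℤ) (g : ℤ) (x : M) :
    B (g • x) (g • x) = g ^ 2 * B x x := by
  rw [map_zsmul, map_zsmul, LinearMap.smul_apply, smul_eq_mul, smul_eq_mul]
  ring

/-- `Λ̃ = Λ₀ ⊕ U` is `Λ₀ × ℤ × ℤ`, `γ` is `div(κ)`, and `κ_* = kδ_*` is `hstar`:
`κ/γ - kδ/2m̃ ∈ Λ` after clearing denominators. -/
theorem stmt_8_general (Λ₀ : Type) [AddCommGroup Λ₀] [Module ℤ Λ₀]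
    [Module.Free ℤ Λ₀]
    (B : Λ₀ →ₗ[ℤ] Λ₀ →ₗ[ℤ] ℤ)
    (heven : ∀ x, 2 ∣ B x x)
    (mt : ℕ) (hmt : 1 ≤ mt)
    (Btil : Λ₀ × ℤ × ℤ → Λ₀ × ℤ × ℤ → ℤ)
    (hBtil : ∀ w z, Btil w z = B w.1 z.1 + w.2.1 * z.2.2 + w.2.2 * z.2.1)
    (v δ : Λ₀ × ℤ × ℤ)
    (hv : v = (0, 1, (mt : ℤ))) (hδ : δ = (0, 1, -(mt : ℤ)))
    (κ : Λ₀ × ℤ × ℤ)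
    (hκΛ : Btil κ v = 0)
    (hprim : ∀ (c : ℤ) (w : Λ₀ × ℤ × ℤ), κ = c • w → IsUnit c)
    (γ : ℕ)
    (l : ℤ) (hsq : Btil κ κ = 2 * l)
    (k : ℤ)
    (hstar : ∃ w, Btil w v = 0 ∧
      (2 * (mt : ℤ)) • κ - (k * (γ : ℤ)) • δ = ((2 * (mt : ℤ)) * (γ : ℤ)) • w)
    (d : ℕ) (hd : d = Int.gcd (2 * (mt : ℤ)) k) :
    ∃! c : ℤ, l = c * ((2 * (mt : ℤ)) / (d : ℤ)) ^ 2 - (mt : ℤ) * (k / (d : ℤ)) ^ 2 := by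
  subst hv hδ hd
  obtain ⟨x, a, b⟩ := κ
  obtain ⟨⟨y, s, _⟩, -, hw⟩ := hstar
  set m : ℤ := (mt : ℤ)
  have hm : 2 * m ≠ 0 := by omega
  simp only [hBtil, map_zero, mul_one, zero_add] at hκΛ hsq
  simp only [Prod.ext_iff, Prod.fst_sub, Prod.snd_sub, Prod.smul_fst, Prod.smul_snd, zsmul_zero,
    sub_zero, smul_eq_mul, mul_one] at hw
  obtain ⟨hΛ₀, hu₁, -⟩ := hw
  have hb : b = -(m * a) := by linarith
  obtain ⟨g, hγ, ha⟩ := Int.exists_eq_ediv_gcd_mul_of_mul_sub_mul_eq hm hu₁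
  have hdN : ((2 * m).gcd k : ℤ) * (2 * m / (2 * m).gcd k) = 2 * m :=
    Int.mul_ediv_cancel' (Int.gcd_dvd_left _ _)
  set N := 2 * m / (2 * m).gcd k
  set k' := k / (2 * m).gcd k
  have : IsAddTorsionFree Λ₀ := .of_isTorsionFree ℤ Λ₀
  have hx : x = g • N • y :=
    zsmul_right_injective hm <| show (2 * m) • x = (2 * m) • g • N • y by
      rw [hΛ₀, hγ, smul_smul, smul_smul, mul_comm N, mul_assoc (2 * m)]
  have hg : g ^ 2 = 1 := Int.isUnit_sq <| hprim g (N • y, k' + N * s, -(m * (k' + N * s))) <| by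
    simp only [hx, ha, hb, Prod.smul_mk, smul_eq_mul]; ring_nf
  obtain ⟨e, he⟩ := heven y
  have hl : l = (e - (2 * m).gcd k * k' * s - m * s ^ 2) * N ^ 2 - m * k' ^ 2 := by
    rw [hx, LinearMap.apply_zsmul_zsmul, LinearMap.apply_zsmul_zsmul, he, hb, ha] at hsq
    refine mul_left_cancel₀ two_ne_zero ?_
    linear_combination
      -hsq + (2 * e * N ^ 2 - 2 * m * (k' + N * s) ^ 2) * hg + 2 * k' * s * N * hdN
  have hN : N ^ 2 ≠ 0 := pow_ne_zero 2 (right_ne_zero_of_mul (hdN ▸ hm))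
  exact ⟨_, hl, fun c hc => mul_right_cancel₀ hN (by linarith)⟩

/-- Proposition 4.4(i): with `Λ̃ = Λ₀ ⊕ U` (Λ₀ even unimodular), `v = u₁ + m̃u₂`,
`δ = u₁ − m̃u₂`, `Λ = v^⊥ = Λ₀ ⊕ ℤδ`, and `κ ∈ Λ` primitive with `κ² = 2l`,
`κ_* = kδ_*` in `D(Λ) ≅ ℤ/2m̃ℤ`, `|k| ≤ m̃`, `d = gcd(2m̃, k)`, there is a unique
integer `c` with `l = c(2m̃/d)² − m̃(k/d)²`.  Here `mt` plays the role of `m̃`,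
the ambient Mukai lattice `Λ̃` is modelled as `Λ₀ × ℤ × ℤ` with the hyperbolic
plane on the two `ℤ`-factors, `γ` is the divisibility `div(κ)`, and the condition
`κ_* = kδ_*` is expressed by `κ/div(κ) − kδ/(2m̃) ∈ Λ` after clearing denominators. -/
theorem stmt_8 (Λ₀ : Type) [AddCommGroup Λ₀] [Module ℤ Λ₀]
    [Module.Free ℤ Λ₀] [Module.Finite ℤ Λ₀]
    (B : Λ₀ →ₗ[ℤ] Λ₀ →ₗ[ℤ] ℤ)
    (hsymm : ∀ x y, B x y = B y x)
    (heven : ∀ x, 2 ∣ B x x)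
    (hunimod : Function.Bijective fun x => B x)
    (mt : ℕ) (hmt : 1 ≤ mt)
    (Btil : Λ₀ × ℤ × ℤ → Λ₀ × ℤ × ℤ → ℤ)
    (hBtil : ∀ w z, Btil w z = B w.1 z.1 + w.2.1 * z.2.2 + w.2.2 * z.2.1)
    (v δ : Λ₀ × ℤ × ℤ)
    (hv : v = (0, 1, (mt : ℤ))) (hδ : δ = (0, 1, -(mt : ℤ)))
    (κ : Λ₀ × ℤ × ℤ)
    (hκΛ : Btil κ v = 0)
    (hprim : ∀ (c : ℤ) (w : Λ₀ × ℤ × ℤ), κ = c • w → IsUnit c)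
    (γ : ℕ) (hγpos : 0 < γ)
    (hdiv : ∀ t : ℤ, ((γ : ℤ) ∣ t ↔ ∃ w, Btil w v = 0 ∧ Btil κ w = t))
    (l : ℤ) (hsq : Btil κ κ = 2 * l)
    (k : ℤ) (hk : |k| ≤ (mt : ℤ))
    (hstar : ∃ w, Btil w v = 0 ∧
      (2 * (mt : ℤ)) • κ - (k * (γ : ℤ)) • δ = ((2 * (mt : ℤ)) * (γ : ℤ)) • w)
    (d : ℕ) (hd : d = Int.gcd (2 * (mt : ℤ)) k) :
    ∃! c : ℤ, l = c * ((2 * (mt : ℤ)) / (d : ℤ)) ^ 2 - (mt : ℤ) * (k / (d : ℤ)) ^ 2 :=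
  stmt_8_general Λ₀ B heven mt hmt Btil hBtil v δ hv hδ κ hκΛ hprim γ l hsq k hstar d hd
end

section
/- With notation as in the setup (Λ̃ = Λ₀ ⊕ U even unimodular ⊕ hyperbolic plane, v = u₁ + m̃u₂, Λ = v^⊥, κ ∈ Λ primitive with κ² = 2l, κ_* = kδ_*, 0 ≤ k ≤ m̃, d = gcd(2m̃, k)), and a ≥ 0 an integer: there exists a nonzero s ∈ Λ̃ in the saturation of the sublattice spanned by κ and v with s² ≥ −2a and |(s,v)| ≤ m̃, if and only if the unique integer c with l = c(2m̃/d)² − m̃(k/d)² satisfies c ≥ −a. Moreover when c ≥ −a one may take s with s² = 2c and (s,v) = −k. -/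
/-!
Since `κ_* = kδ_*`, the vector `s₀ = κ/γ - (k/2m̃) v` lies in `Λ̃`, and primitivity of `κ` forces
`γ = 2m̃/d`, so that `γ s₀ = κ - (k/d) v`. A vector `w ∈ Λ` with `(κ, w) = γ` pairs to `1` with `s₀`
and to `0` with `v`, so the saturation of `⟨κ, v⟩` is `ℤ s₀ ⊕ ℤ v`. For `s = α s₀ + β v` one has
`s² = 2cα² - 2kαβ + 2m̃β²` and `(s, v) = 2m̃β - kα`, hence `2m̃ s² = (4m̃c - k²)α² + (s, v)²`.
Since `(s, v) ≡ -kα (mod 2m̃)` and `|(s, v)| ≤ m̃`, we get `(s, v)² ≤ k²α²`, so `s² ≤ 2cα²`; for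
`s ≠ 0` this forces `α ≠ 0`, and then `s² ≤ 2c` once `c < 0`. The vector `s₀` itself has
`s₀² = 2c` and `(s₀, v) = -k`.
-/

section TorsionFree

variable {M : Type*} [AddCommGroup M] [IsAddTorsionFree M]

theorem dvd_of_zsmul_eq_zsmul_of_primitive {κ z : M}
    (hκ : ∀ (c : ℤ) (w : M), κ = c • w → IsUnit c) {T γ : ℤ} (hγ : γ ≠ 0)
    (h : T • κ = γ • z) : γ ∣ T := by
  obtain ⟨γ', hγ'⟩ : (T.gcd γ : ℤ) ∣ γ := Int.gcd_dvd_right T γ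
  have hg : (T.gcd γ : ℤ) ≠ 0 := by
    rintro hg
    exact hγ (by simpa [hg] using hγ')
  have hκ' : κ = γ' • (T.gcdA γ • z + T.gcdB γ • κ) := by
    apply zsmul_right_injective hg
    linear_combination (norm := module)
      T.gcdA γ • h + Int.gcd_eq_gcd_ab T γ • κ + hγ' • (T.gcdA γ • z + T.gcdB γ • κ)
  rw [hγ', IsUnit.mul_right_dvd (hκ _ _ hκ')]
  exact Int.gcd_dvd_left T γ

theorem gcd_mul_eq_of_zsmul_eq_sub_zsmul {κ v s : M}
    (hκ : ∀ (c : ℤ) (w : M), κ = c • w → IsUnit c) (g : M →+ ℤ) (hg : g v = 1)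
    {n γ k : ℤ} (hn : 0 < n) (hγ : 0 < γ) (h : (n * γ) • s = n • κ - (k * γ) • v) :
    (n.gcd k : ℤ) * γ = n := by
  have hnkγ : n ∣ k * γ := ⟨g κ - γ * g s, by
    have := congrArg g h
    simp only [map_zsmul, map_sub, hg, smul_eq_mul] at this
    linear_combination this⟩
  have hn_dvd : n ∣ n.gcd k * γ := by
    rw [show (n.gcd k : ℤ) * γ = n * (n.gcdA k * γ) + k * γ * n.gcdB k by
      rw [Int.gcd_eq_gcd_ab]; ring]
    exact dvd_add (dvd_mul_right _ _) (dvd_mul_of_dvd_left hnkγ _)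
  obtain ⟨T, hT⟩ := Int.gcd_dvd_left n k
  obtain ⟨K, hK⟩ := Int.gcd_dvd_right n k
  have hd : (n.gcd k : ℤ) ≠ 0 := by
    rintro hd
    rw [hd, zero_mul] at hT
    exact hn.ne' hT
  have hTκ : T • κ = γ • (T • s + K • v) := by
    apply zsmul_right_injective hd
    linear_combination (norm := module) -h - hT • κ + (γ • hT) • s + (γ • hK) • v
  have hdγ := mul_dvd_mul_left (n.gcd k : ℤ) (dvd_of_zsmul_eq_zsmul_of_primitive hκ hγ.ne' hTκ)
  rw [← hT] at hdγ
  exact Int.dvd_antisymm (by positivity) hn.le hdγ hn_dvd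

theorem eq_zsmul_add_zsmul_of_zsmul_eq {s₀ v s : M} (f g : M →+ ℤ) (hfs₀ : f s₀ = 1)
    (hfv : f v = 0) (hgv : g v = 1) {N x y : ℤ} (hN : N ≠ 0) (h : N • s = x • s₀ + y • v) :
    s = f s • s₀ + (g s - f s * g s₀) • v := by
  have hf := congrArg f h
  have hg := congrArg g h
  simp only [map_zsmul, map_add, hfs₀, hfv, hgv, smul_eq_mul] at hf hg
  apply zsmul_right_injective hN
  linear_combination (norm := module) h - hf • s₀ - (hg - g s₀ • hf) • v

end TorsionFree

theorem Int.sq_le_sq_of_dvd_add_of_abs_le {m e t : ℤ} (hdvd : 2 * m ∣ e + t) (he : |e| ≤ m) :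
    e ^ 2 ≤ t ^ 2 := by
  rcases le_or_gt m |t| with ht | ht
  · rw [← sq_abs e, ← sq_abs t]
    exact pow_le_pow_left₀ (abs_nonneg e) (he.trans ht) 2
  · have : e + t = 0 :=
      Int.eq_zero_of_abs_lt_dvd hdvd ((abs_add_le e t).trans_lt (by linarith))
    rw [show e = -t by linarith, neg_sq]

theorem neg_le_of_neg_two_mul_le_binaryForm {m k c a α β : ℤ} (hm : 0 < m) (ha : 0 ≤ a)
    (hαβ : α ≠ 0 ∨ β ≠ 0) (hv : |2 * m * β - k * α| ≤ m)
    (hq : -(2 * a) ≤ 2 * c * α ^ 2 - 2 * k * α * β + 2 * m * β ^ 2) : -a ≤ c := by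
  have he : (2 * m * β - k * α) ^ 2 ≤ (k * α) ^ 2 :=
    Int.sq_le_sq_of_dvd_add_of_abs_le ⟨β, by ring⟩ hv
  rcases eq_or_ne α 0 with rfl | hα
  · have : β = 0 := by simpa [hm.ne'] using he
    simp_all
  · have hcross : 2 * m * β ^ 2 - 2 * k * α * β ≤ 0 := by
      refine nonpos_of_mul_nonpos_right (a := 2 * m) ?_ (by positivity)
      linear_combination he
    by_contra! hc
    have hα2 : c * α ^ 2 ≤ c * 1 :=
      mul_le_mul_of_nonpos_left ((one_le_sq_iff_one_le_abs α).mpr (Int.one_le_abs hα)) (by omega)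
    linarith

section Hyperbolic

variable {Λ₀ : Type*} [AddCommGroup Λ₀]

-- `hw` encodes `κ_* = kδ_*`; as `δ + 2m u₂ = v`, the vector `w - k u₂` is `κ/γ - (k/2m) v`.
theorem gcd_mul_eq_and_zsmul_eq_of_discr [IsAddTorsionFree Λ₀] {m γ k : ℤ} (hm : 0 < m)
    (hγ : 0 < γ) {κ w : Λ₀ × ℤ × ℤ} (hκ : ∀ (c : ℤ) (w : Λ₀ × ℤ × ℤ), κ = c • w → IsUnit c)
    (hw : (2 * m) • κ - (k * γ) • ((0, 1, -m) : Λ₀ × ℤ × ℤ) = (2 * m * γ) • w) :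
    ((2 * m).gcd k : ℤ) * γ = 2 * m ∧
      γ • (w - (0, 0, k)) = κ - (k / (2 * m).gcd k) • ((0, 1, m) : Λ₀ × ℤ × ℤ) := by
  set v : Λ₀ × ℤ × ℤ := (0, 1, m)
  have hs : (2 * m * γ) • (w - (0, 0, k)) = (2 * m) • κ - (k * γ) • v := by
    rw [zsmul_sub, ← hw]
    ext <;> simp [v]; ring
  have hd := gcd_mul_eq_of_zsmul_eq_sub_zsmul hκ
    ((AddMonoidHom.fst ℤ ℤ).comp (AddMonoidHom.snd Λ₀ (ℤ × ℤ))) rfl (by positivity) hγ hs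
  refine ⟨hd, ?_⟩
  obtain ⟨K, hK⟩ := Int.gcd_dvd_right (2 * m) k
  have hd0 : ((2 * m).gcd k : ℤ) ≠ 0 := by
    rintro h0
    rw [h0, zero_mul] at hd
    omega
  rw [Int.ediv_eq_of_eq_mul_right hd0 hK]
  apply zsmul_right_injective (show 2 * m ≠ 0 by omega)
  linear_combination (norm := module) hs - (γ • hK) • v - (K • hd) • v

variable [Module ℤ Λ₀] (B : Λ₀ →ₗ[ℤ] Λ₀ →ₗ[ℤ] ℤ)

def hypForm : Λ₀ × ℤ × ℤ →+ Λ₀ × ℤ × ℤ →+ ℤ :=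
  AddMonoidHom.mk'
    (fun w => AddMonoidHom.mk' (fun z => B w.1 z.1 + w.2.1 * z.2.2 + w.2.2 * z.2.1)
      fun _ _ => by simp only [Prod.fst_add, Prod.snd_add, map_add]; ring)
    fun _ _ => by ext; simp; ring

@[simp]
theorem hypForm_apply (w z : Λ₀ × ℤ × ℤ) :
    hypForm B w z = B w.1 z.1 + w.2.1 * z.2.2 + w.2.2 * z.2.1 :=
  rfl

theorem hypForm_comm_of_fst_eq_zero {w : Λ₀ × ℤ × ℤ} (hw : w.1 = 0) (z : Λ₀ × ℤ × ℤ) :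
    hypForm B w z = hypForm B z w := by
  simp [hw]; ring

theorem hypForm_zsmul_add_zsmul {m k c : ℤ} {s₀ : Λ₀ × ℤ × ℤ} (hs₀ : hypForm B s₀ s₀ = 2 * c)
    (hs₀v : hypForm B s₀ (0, 1, m) = -k) (α β : ℤ) :
    hypForm B (α • s₀ + β • (0, 1, m)) (α • s₀ + β • (0, 1, m)) =
        2 * c * α ^ 2 - 2 * k * α * β + 2 * m * β ^ 2 ∧
      hypForm B (α • s₀ + β • (0, 1, m)) (0, 1, m) = 2 * m * β - k * α := by
  have hvs₀ :=
    (hypForm_comm_of_fst_eq_zero B (rfl : ((0, 1, m) : Λ₀ × ℤ × ℤ).1 = 0) s₀).trans hs₀v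
  have hvv : hypForm B (0, 1, m) ((0, 1, m) : Λ₀ × ℤ × ℤ) = 2 * m := by simp; ring
  simp only [map_add, map_zsmul, AddMonoidHom.add_apply, AddMonoidHom.zsmul_apply, smul_eq_mul,
    hs₀, hs₀v, hvs₀, hvv]
  constructor <;> ring

theorem exists_saturation_basis [IsAddTorsionFree Λ₀] {m γ k c : ℤ} (hm : 0 < m) (hγ : 0 < γ)
    {κ w wg : Λ₀ × ℤ × ℤ} (hκ : ∀ (c : ℤ) (w : Λ₀ × ℤ × ℤ), κ = c • w → IsUnit c)
    (hκv : hypForm B κ (0, 1, m) = 0)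
    (hκκ : hypForm B κ κ = 2 * (c * (2 * m / (2 * m).gcd k) ^ 2 - m * (k / (2 * m).gcd k) ^ 2))
    (hw : (2 * m) • κ - (k * γ) • ((0, 1, -m) : Λ₀ × ℤ × ℤ) = (2 * m * γ) • w)
    (hwgv : hypForm B wg (0, 1, m) = 0) (hwgκ : hypForm B κ wg = γ) :
    ∃ s₀ : Λ₀ × ℤ × ℤ, s₀ ≠ 0 ∧ (2 * m) • s₀ = ((2 * m).gcd k : ℤ) • κ + (-k) • (0, 1, m) ∧
      hypForm B s₀ s₀ = 2 * c ∧ hypForm B s₀ (0, 1, m) = -k ∧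
      ∀ (s : Λ₀ × ℤ × ℤ) (N x y : ℤ), N ≠ 0 → N • s = x • κ + y • (0, 1, m) →
        ∃ α β : ℤ, s = α • s₀ + β • (0, 1, m) := by
  obtain ⟨hd, hs₀⟩ := gcd_mul_eq_and_zsmul_eq_of_discr hm hγ hκ hw
  set d : ℤ := ((2 * m).gcd k : ℤ)
  set s₀ := w - (0, 0, k)
  set v : Λ₀ × ℤ × ℤ := (0, 1, m)
  have hd0 : d ≠ 0 := by rintro h0; rw [h0, zero_mul] at hd; omega
  obtain ⟨K, hk⟩ : d ∣ k := Int.gcd_dvd_right _ _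
  rw [Int.ediv_eq_of_eq_mul_right hd0 hk] at hs₀ hκκ
  rw [← hd, Int.mul_ediv_cancel_left _ hd0] at hκκ
  have hcomm := hypForm_comm_of_fst_eq_zero B (rfl : v.1 = 0)
  have hvv : hypForm B v v = 2 * m := by simp [v]; ring
  have hleft : ∀ x, γ * hypForm B s₀ x = hypForm B κ x - K * hypForm B v x := fun x => by
    simpa only [map_zsmul, map_sub, AddMonoidHom.zsmul_apply, AddMonoidHom.sub_apply, smul_eq_mul]
      using congrArg (fun y => hypForm B y x) hs₀
  have hright : ∀ x, γ * hypForm B x s₀ = hypForm B x κ - K * hypForm B x v := fun x => by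
    simpa only [map_zsmul, map_sub, smul_eq_mul] using congrArg (hypForm B x) hs₀
  have hs₀wg : hypForm B s₀ wg = 1 := by
    apply mul_left_cancel₀ hγ.ne'
    rw [hleft, hwgκ, hcomm, hwgv]; ring
  refine ⟨s₀, fun h => by simp [h] at hs₀wg, ?_, ?_, ?_, fun s N x y hN h => ?_⟩
  · linear_combination (norm := module) d • hs₀ - hd • s₀ + hk • v
  · apply mul_left_cancel₀ (pow_ne_zero 2 hγ.ne')
    linear_combination γ * hleft s₀ + hright κ - K * hright v + hκκ - 2 * K * hκv - K * hcomm κ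
      + K ^ 2 * hvv
  · apply mul_left_cancel₀ hγ.ne'
    rw [hleft, hκv, hvv, hk, ← hd]; ring
  · exact ⟨_, _, eq_zsmul_add_zsmul_of_zsmul_eq ((hypForm B).flip wg) ((hypForm B).flip (0, 0, 1))
      hs₀wg (by rw [AddMonoidHom.flip_apply, hcomm, hwgv]) (by simp [v]) hN (x := x * γ)
      (y := x * K + y) (by linear_combination (norm := module) h - x • hs₀)⟩

end Hyperbolic

theorem stmt_9_general (Λ₀ : Type) [AddCommGroup Λ₀] [Module ℤ Λ₀]
    [Module.Free ℤ Λ₀]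
    (B : Λ₀ →ₗ[ℤ] Λ₀ →ₗ[ℤ] ℤ)
    (mt : ℕ) (hmt : 1 ≤ mt)
    (Btil : Λ₀ × ℤ × ℤ → Λ₀ × ℤ × ℤ → ℤ)
    (hBtil : ∀ w z, Btil w z = B w.1 z.1 + w.2.1 * z.2.2 + w.2.2 * z.2.1)
    (v δ : Λ₀ × ℤ × ℤ)
    (hv : v = (0, 1, (mt : ℤ))) (hδ : δ = (0, 1, -(mt : ℤ)))
    (κ : Λ₀ × ℤ × ℤ)
    (hκΛ : Btil κ v = 0)
    (hprim : ∀ (c : ℤ) (w : Λ₀ × ℤ × ℤ), κ = c • w → IsUnit c)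
    (γ : ℕ) (hγpos : 0 < γ)
    (hdiv : ∀ t : ℤ, ((γ : ℤ) ∣ t ↔ ∃ w, Btil w v = 0 ∧ Btil κ w = t))
    (l : ℤ) (hsq : Btil κ κ = 2 * l)
    (k : ℤ) (hk0 : 0 ≤ k) (hk : k ≤ (mt : ℤ))
    (hstar : ∃ w, Btil w v = 0 ∧
      (2 * (mt : ℤ)) • κ - (k * (γ : ℤ)) • δ = ((2 * (mt : ℤ)) * (γ : ℤ)) • w)
    (d : ℕ) (hd : d = Int.gcd (2 * (mt : ℤ)) k)
    (c : ℤ) (hc : l = c * ((2 * (mt : ℤ)) / (d : ℤ)) ^ 2 - (mt : ℤ) * (k / (d : ℤ)) ^ 2)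
    (a : ℕ) :
    ((∃ s : Λ₀ × ℤ × ℤ, s ≠ 0 ∧
        (∃ N x y : ℤ, N ≠ 0 ∧ N • s = x • κ + y • v) ∧
        -(2 * (a : ℤ)) ≤ Btil s s ∧ |Btil s v| ≤ (mt : ℤ)) ↔ -(a : ℤ) ≤ c) ∧
    (-(a : ℤ) ≤ c → ∃ s : Λ₀ × ℤ × ℤ, s ≠ 0 ∧
        (∃ N x y : ℤ, N ≠ 0 ∧ N • s = x • κ + y • v) ∧
        Btil s s = 2 * c ∧ Btil s v = -k) := by
  have : IsAddTorsionFree Λ₀ := .of_isTorsionFree ℤ Λ₀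
  obtain rfl : Btil = fun w z => hypForm B w z := funext₂ hBtil
  beta_reduce at *
  subst hv hδ hd
  obtain ⟨w, -, hw⟩ := hstar
  obtain ⟨wg, hwgv, hwgκ⟩ := (hdiv γ).mp dvd_rfl
  obtain ⟨s₀, hs₀, hs₀sat, hs₀s₀, hs₀v, hbasis⟩ := exists_saturation_basis B (by omega) (by omega)
    hprim hκΛ (hsq.trans (by rw [hc])) hw hwgv hwgκ
  have hs₀mem : ∃ N x y : ℤ, N ≠ 0 ∧ N • s₀ = x • κ + y • ((0, 1, mt) : Λ₀ × ℤ × ℤ) :=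
    ⟨2 * mt, _, _, by omega, hs₀sat⟩
  refine ⟨⟨?_, fun hca => ⟨s₀, hs₀, hs₀mem, by rw [hs₀s₀]; omega, ?_⟩⟩,
    fun _ => ⟨s₀, hs₀, hs₀mem, hs₀s₀, hs₀v⟩⟩
  · rintro ⟨s, hs, ⟨N, x, y, hN, hNs⟩, hsa, hsv⟩
    obtain ⟨α, β, rfl⟩ := hbasis s N x y hN hNs
    obtain ⟨hss, hsv'⟩ := hypForm_zsmul_add_zsmul B hs₀s₀ hs₀v α β
    refine neg_le_of_neg_two_mul_le_binaryForm (by omega) (by positivity) ?_ (hsv' ▸ hsv)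
      (hss ▸ hsa)
    contrapose! hs
    simp [hs]
  · rw [hs₀v, abs_neg, abs_of_nonneg hk0]
    exact hk

/-- Proposition 4.4(ii): with the setup of `Λ̃ = Λ₀ ⊕ U`, `v = u₁ + m̃u₂`, `Λ = v^⊥`,
`κ ∈ Λ` primitive with `κ² = 2l`, `κ_* = kδ_*`, `0 ≤ k ≤ m̃`, `d = gcd(2m̃, k)`,
and `a ≥ 0`: there is a nonzero `s ∈ Λ̃` in the saturation of `⟨κ, v⟩` with
`s² ≥ −2a` and `|(s,v)| ≤ m̃` iff the unique `c` with `l = c(2m̃/d)² − m̃(k/d)²`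
satisfies `c ≥ −a`; and in that case one may take `s` with `s² = 2c`, `(s,v) = −k`.
Here `mt` plays the role of `m̃`, and membership in the saturation is expressed by
`N • s = x • κ + y • v` for some nonzero integer `N`. -/
theorem stmt_9 (Λ₀ : Type) [AddCommGroup Λ₀] [Module ℤ Λ₀]
    [Module.Free ℤ Λ₀] [Module.Finite ℤ Λ₀]
    (B : Λ₀ →ₗ[ℤ] Λ₀ →ₗ[ℤ] ℤ)
    (hsymm : ∀ x y, B x y = B y x)
    (heven : ∀ x, 2 ∣ B x x)
    (hunimod : Function.Bijective fun x => B x)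
    (mt : ℕ) (hmt : 1 ≤ mt)
    (Btil : Λ₀ × ℤ × ℤ → Λ₀ × ℤ × ℤ → ℤ)
    (hBtil : ∀ w z, Btil w z = B w.1 z.1 + w.2.1 * z.2.2 + w.2.2 * z.2.1)
    (v δ : Λ₀ × ℤ × ℤ)
    (hv : v = (0, 1, (mt : ℤ))) (hδ : δ = (0, 1, -(mt : ℤ)))
    (κ : Λ₀ × ℤ × ℤ)
    (hκΛ : Btil κ v = 0)
    (hprim : ∀ (c : ℤ) (w : Λ₀ × ℤ × ℤ), κ = c • w → IsUnit c)
    (γ : ℕ) (hγpos : 0 < γ)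
    (hdiv : ∀ t : ℤ, ((γ : ℤ) ∣ t ↔ ∃ w, Btil w v = 0 ∧ Btil κ w = t))
    (l : ℤ) (hsq : Btil κ κ = 2 * l)
    (k : ℤ) (hk0 : 0 ≤ k) (hk : k ≤ (mt : ℤ))
    (hstar : ∃ w, Btil w v = 0 ∧
      (2 * (mt : ℤ)) • κ - (k * (γ : ℤ)) • δ = ((2 * (mt : ℤ)) * (γ : ℤ)) • w)
    (d : ℕ) (hd : d = Int.gcd (2 * (mt : ℤ)) k)
    (c : ℤ) (hc : l = c * ((2 * (mt : ℤ)) / (d : ℤ)) ^ 2 - (mt : ℤ) * (k / (d : ℤ)) ^ 2)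
    (a : ℕ) :
    ((∃ s : Λ₀ × ℤ × ℤ, s ≠ 0 ∧
        (∃ N x y : ℤ, N ≠ 0 ∧ N • s = x • κ + y • v) ∧
        -(2 * (a : ℤ)) ≤ Btil s s ∧ |Btil s v| ≤ (mt : ℤ)) ↔ -(a : ℤ) ≤ c) ∧
    (-(a : ℤ) ≤ c → ∃ s : Λ₀ × ℤ × ℤ, s ≠ 0 ∧
        (∃ N x y : ℤ, N ≠ 0 ∧ N • s = x • κ + y • v) ∧
        Btil s s = 2 * c ∧ Btil s v = -k) :=
  stmt_9_general Λ₀ B mt hmt Btil hBtil v δ hv hδ κ hκΛ hprim γ hγpos hdiv l hsq k hk0 hk hstar d hd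
    c hc a
end

section
/- With Λ̃ = Λ₀ ⊕ U, v = u₁ + m̃u₂, δ = u₁ − m̃u₂, Λ = v^⊥: if κ ∈ Λ is primitive with κ_* = kδ_* in D(Λ) ≅ Z/2m̃Z and d = gcd(2m̃, k), then div(κ) = 2m̃/d, and the vector s = (dκ − kv)/(2m̃) is an integral element of Λ̃ with (s, v) = −k. -/
/-!
Write `κ = (x, a, b)` and `w = (y, c, e)`. Orthogonality to `v` forces `b = -m̃a`, and the first
coordinate of `2m̃κ - kγδ = 2m̃γw` gives `x = γy`. Since `κ = (γy, a, -m̃a)` is primitive, `γ` is coprime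
to `a`; pairing `κ` with `(0, -1, m̃) ∈ Λ` gives `γ ∣ 2m̃a`, hence `2m̃ = γq`. The second
coordinate then reads `k = q(a - γc)`, so `gcd(2m̃, k) = q·gcd(γ, a - γc) = q`, i.e. `d = q`
and `γ = 2m̃/d`; the vector `s = (y, c, m̃c - qa)` is the required one.
-/

-- Here `c • x` is the `zsmul` of the group, not the scalar action of the `Module ℤ M` instance.
lemma zsmul_right_injective_of_free {M : Type*} [AddCommGroup M] [Module ℤ M] [Module.Free ℤ M]
    {c : ℤ} (hc : c ≠ 0) : Function.Injective fun x : M => c • x := fun x y h =>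
  smul_right_injective M hc <|
    (int_smul_eq_zsmul ‹_› c x).trans (h.trans (int_smul_eq_zsmul ‹_› c y).symm)

lemma Int.gcd_mul_right_of_isCoprime_add_mul {g a : ℤ} (h : IsCoprime g a) (t q : ℤ) :
    Int.gcd (g * q) ((a + g * t) * q) = q.natAbs := by
  rw [Int.gcd_mul_right, Int.isCoprime_iff_gcd_eq_one.mp (h.add_mul_left_right t), one_mul]

lemma isCoprime_of_primitive {M : Type*} [AddCommGroup M] {x y : M} {a b g m : ℤ}
    (hprim : ∀ (c : ℤ) (w : M × ℤ × ℤ), (x, a, b) = c • w → IsUnit c)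
    (hx : x = g • y) (hb : b = -(m * a)) : IsCoprime g a := by
  rw [Int.isCoprime_iff_gcd_eq_one]
  obtain ⟨g', hg'⟩ := Int.gcd_dvd_left g a
  obtain ⟨a', ha'⟩ := Int.gcd_dvd_right g a
  have hunit := hprim _ (g' • y, a', -(m * a')) <| by
    rw [Prod.smul_mk, Prod.smul_mk, smul_eq_mul, smul_eq_mul, ← mul_zsmul, ← hg', ← ha', hx, hb]
    congr 2; linear_combination (-m) * ha'
  rcases Int.isUnit_iff.mp hunit with h | h <;> omega

lemma form_apply_zero_fst {M : Type*} [AddCommGroup M] [Module ℤ M] (B : M →ₗ[ℤ] M →ₗ[ℤ] ℤ)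
    {Btil : M × ℤ × ℤ → M × ℤ × ℤ → ℤ}
    (hBtil : ∀ w z, Btil w z = B w.1 z.1 + w.2.1 * z.2.2 + w.2.2 * z.2.1)
    (w : M × ℤ × ℤ) (a b : ℤ) : Btil w (0, a, b) = w.2.1 * b + w.2.2 * a := by
  simp [hBtil]

theorem stmt_10_general (Λ₀ : Type) [AddCommGroup Λ₀] [Module ℤ Λ₀]
    [Module.Free ℤ Λ₀]
    (B : Λ₀ →ₗ[ℤ] Λ₀ →ₗ[ℤ] ℤ)
    (mt : ℕ) (hmt : 1 ≤ mt)
    (Btil : Λ₀ × ℤ × ℤ → Λ₀ × ℤ × ℤ → ℤ)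
    (hBtil : ∀ w z, Btil w z = B w.1 z.1 + w.2.1 * z.2.2 + w.2.2 * z.2.1)
    (v δ : Λ₀ × ℤ × ℤ)
    (hv : v = (0, 1, (mt : ℤ))) (hδ : δ = (0, 1, -(mt : ℤ)))
    (κ : Λ₀ × ℤ × ℤ)
    (hκΛ : Btil κ v = 0)
    (hprim : ∀ (c : ℤ) (w : Λ₀ × ℤ × ℤ), κ = c • w → IsUnit c)
    (γ : ℕ) (hγpos : 0 < γ)
    (hdiv : ∀ t : ℤ, ((γ : ℤ) ∣ t ↔ ∃ w, Btil w v = 0 ∧ Btil κ w = t))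
    (k : ℤ)
    (hstar : ∃ w, Btil w v = 0 ∧
      (2 * (mt : ℤ)) • κ - (k * (γ : ℤ)) • δ = ((2 * (mt : ℤ)) * (γ : ℤ)) • w)
    (d : ℕ) (hd : d = Int.gcd (2 * (mt : ℤ)) k) :
    γ = 2 * mt / d ∧
    ∃ s : Λ₀ × ℤ × ℤ, (2 * (mt : ℤ)) • s = (d : ℤ) • κ - k • v ∧ Btil s v = -k := by
  obtain ⟨w, -, hw⟩ := hstar
  subst hv hδ
  obtain ⟨x, a, b⟩ := κ
  obtain ⟨y, c, e⟩ := w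
  have hb : b = -(mt * a) := by
    rw [form_apply_zero_fst B hBtil] at hκΛ; dsimp at hκΛ; linarith
  simp only [Prod.ext_iff, Prod.smul_mk, Prod.fst_sub, Prod.snd_sub, zsmul_zero, sub_zero,
    smul_eq_mul] at hw
  obtain ⟨hwx, hwa, -⟩ := hw
  have hx : x = (γ : ℤ) • y :=
    zsmul_right_injective_of_free (c := 2 * mt) (by omega) (hwx.trans (mul_zsmul y _ _))
  have hcop : IsCoprime (γ : ℤ) a := isCoprime_of_primitive hprim hx hb
  have hdvd : (γ : ℤ) ∣ 2 * mt * a := (hdiv _).mpr ⟨(0, -1, mt), by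
    simp [form_apply_zero_fst B hBtil], by rw [form_apply_zero_fst B hBtil, hb]; ring⟩
  obtain ⟨q, hq⟩ := hcop.dvd_of_dvd_mul_right hdvd
  have hq0 : 0 < q := pos_of_mul_pos_right (hq ▸ by positivity) (Int.natCast_nonneg γ)
  have hk : k = (a + γ * -c) * q := mul_left_cancel₀ (Int.natCast_ne_zero.mpr hγpos.ne') <| by
    linear_combination -hwa + (a - γ * c) * hq
  have hdq : (d : ℤ) = q := by
    rw [hd, hq, hk, Int.gcd_mul_right_of_isCoprime_add_mul hcop, Int.natAbs_of_nonneg hq0.le]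
  refine ⟨?_, (y, c, mt * c - q * a), ?_, ?_⟩
  · have h2mt : 2 * mt = γ * d := by exact_mod_cast hdq ▸ hq
    rw [h2mt, Nat.mul_div_cancel _ (by omega)]
  · simp only [hdq, Prod.smul_mk, Prod.ext_iff, Prod.fst_sub, Prod.snd_sub, zsmul_zero, sub_zero,
      smul_eq_mul]
    refine ⟨by rw [hx, ← mul_zsmul, mul_comm q, ← hq], ?_, ?_⟩
    · linear_combination c * hq + hk
    · linear_combination -q * hb + mt * hk + mt * c * hq
  · rw [form_apply_zero_fst B hBtil]
    linear_combination c * hq + hk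

/-- With `Λ̃ = Λ₀ ⊕ U`, `v = u₁ + m̃u₂`, `δ = u₁ − m̃u₂`, `Λ = v^⊥`: if `κ ∈ Λ` is
primitive with `κ_* = kδ_*` in `D(Λ) ≅ ℤ/2m̃ℤ` and `d = gcd(2m̃, k)`, then
`div(κ) = 2m̃/d`, and `s = (dκ − kv)/(2m̃)` is an integral element of `Λ̃` with
`(s, v) = −k`.  Here `mt` plays the role of `m̃` and `γ` of `div(κ)`. -/
theorem stmt_10 (Λ₀ : Type) [AddCommGroup Λ₀] [Module ℤ Λ₀]
    [Module.Free ℤ Λ₀] [Module.Finite ℤ Λ₀]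
    (B : Λ₀ →ₗ[ℤ] Λ₀ →ₗ[ℤ] ℤ)
    (hsymm : ∀ x y, B x y = B y x)
    (heven : ∀ x, 2 ∣ B x x)
    (hunimod : Function.Bijective fun x => B x)
    (mt : ℕ) (hmt : 1 ≤ mt)
    (Btil : Λ₀ × ℤ × ℤ → Λ₀ × ℤ × ℤ → ℤ)
    (hBtil : ∀ w z, Btil w z = B w.1 z.1 + w.2.1 * z.2.2 + w.2.2 * z.2.1)
    (v δ : Λ₀ × ℤ × ℤ)
    (hv : v = (0, 1, (mt : ℤ))) (hδ : δ = (0, 1, -(mt : ℤ)))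
    (κ : Λ₀ × ℤ × ℤ)
    (hκΛ : Btil κ v = 0)
    (hprim : ∀ (c : ℤ) (w : Λ₀ × ℤ × ℤ), κ = c • w → IsUnit c)
    (γ : ℕ) (hγpos : 0 < γ)
    (hdiv : ∀ t : ℤ, ((γ : ℤ) ∣ t ↔ ∃ w, Btil w v = 0 ∧ Btil κ w = t))
    (k : ℤ) (hk : |k| ≤ (mt : ℤ))
    (hstar : ∃ w, Btil w v = 0 ∧
      (2 * (mt : ℤ)) • κ - (k * (γ : ℤ)) • δ = ((2 * (mt : ℤ)) * (γ : ℤ)) • w)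
    (d : ℕ) (hd : d = Int.gcd (2 * (mt : ℤ)) k) :
    γ = 2 * mt / d ∧
    ∃ s : Λ₀ × ℤ × ℤ, (2 * (mt : ℤ)) • s = (d : ℤ) • κ - k • v ∧ Btil s v = -k :=
  stmt_10_general Λ₀ B mt hmt Btil hBtil v δ hv hδ κ hκΛ hprim γ hγpos hdiv k hstar d hd
end

section
/- Let Λ = Λ₀ ⊕ Zδ with Λ₀ even unimodular containing at least three orthogonal copies of the hyperbolic plane U and δ² = −2m̃. Let h ∈ Λ be primitive of divisibility γ and positive square. Let k be an integer with 0 ≤ k ≤ m̃ and let l be any integer such that some (equivalently, every) primitive class with square 2l and κ_* = kδ_* exists in Λ. Then there exists a primitive κ ∈ Λ with κ² = 2l, κ_* = kδ_*, and (κ, h) = 0, if and only if γ divides k. -/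
/-!
Write `δ = (0, 1)` for the generator of the second summand. For `div κ = g`, the condition
`κ_* = kδ_*` says that `κ = g u + c δ` with `2m̃ c = k g`, and then
`(κ, x) = g ((u, x) - k x_δ)` for every `x`; so `κ ⟂ h` exactly when `(u, h) = k h_δ`.
Unimodularity of `Λ₀` makes the `Λ₀`-part of `h` divisible by `γ`, so primitivity of `h` gives
`gcd(γ, h_δ) = 1`, and `γ ∣ k h_δ = (h, u)` forces `γ ∣ k`. Conversely, if `γ ∣ k` choose `v` with
`(h, v) = k h_δ`. The three hyperbolic planes contain a hyperbolic pair orthogonal to `h`, and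
adding a combination of it to `v` leaves `(v, h)` unchanged while making `(u, ·)` hit `1` on `Λ₀`
(so that `κ = g u + c δ` is primitive of divisibility `g`) and adjusting the even number
`u² - 2k u_δ` to its value at a given class `κ₀ = g u₀ + c δ`, which gives `κ² = κ₀² = 2l`.
-/

open scoped Matrix

section Primitive

variable {N : Type*} [AddCommGroup N]

def IsPrimitive (v : N) : Prop :=
  ∀ (c : ℤ) (w : N), v = c • w → IsUnit c

theorem IsPrimitive.of_apply_eq_one {v : N} (φ : N →ₗ[ℤ] ℤ) (h : φ v = 1) : IsPrimitive v := by
  rintro c w rfl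
  exact .of_mul_eq_one (φ w) (by simpa using h)

variable {M : Type*} [AddCommGroup M]

theorem IsPrimitive.isCoprime {p : M × ℤ} (hp : IsPrimitive p) {n c : ℤ} {x : M}
    (h₁ : p.1 = n • x) (h₂ : n ∣ p.2 - c) : IsCoprime n c := by
  obtain ⟨n', hn'⟩ := Int.gcd_dvd_left n c
  obtain ⟨b, hb⟩ := ((Int.gcd_dvd_left n c).trans h₂).add (Int.gcd_dvd_right n c)
  have hunit := hp (n.gcd c) (n' • x, b)
    (Prod.ext (by simp only [Prod.smul_fst, h₁, ← mul_smul, ← hn']) ?_)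
  · rwa [Int.isCoprime_iff_gcd_eq_one, ← Nat.isUnit_iff, ← Int.ofNat_isUnit]
  simpa using hb

end Primitive

section Unimodular

variable {M : Type*} [AddCommGroup M] {B : M →ₗ[ℤ] M →ₗ[ℤ] ℤ}

theorem isTorsionFree_of_injective (hB : Function.Injective B) : Module.IsTorsionFree ℤ M :=
  hB.moduleIsTorsionFree _ (map_zsmul B)

theorem exists_eq_smul_of_forall_dvd (hB : Function.Bijective B) {n : ℤ} {x : M}
    (hx : ∀ y, n ∣ B x y) : ∃ x', x = n • x' := by
  let φ : M →ₗ[ℤ] ℤ :=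
    { toFun := fun y => B x y / n
      map_add' := fun y z => by simp [Int.add_ediv_of_dvd_left (hx y)]
      map_smul' := fun r y => by simp [Int.mul_ediv_assoc r (hx y)] }
  obtain ⟨x', hx'⟩ := hB.2 φ
  refine ⟨x', hB.1 (LinearMap.ext fun y => ?_)⟩
  simp [hx', φ, Int.mul_ediv_cancel' (hx y)]

end Unimodular

section SumForm

variable {M : Type*} [AddCommGroup M] {B : M →ₗ[ℤ] M →ₗ[ℤ] ℤ} {m : ℤ}

variable (B m) in
/-- The form of `Λ₀ ⊕ ℤδ` with `δ = (0, 1)` and `δ² = -2m`. -/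
def sumForm : M × ℤ →ₗ[ℤ] M × ℤ →ₗ[ℤ] ℤ :=
  B.compl₁₂ (LinearMap.fst ℤ M ℤ) (LinearMap.fst ℤ M ℤ) -
    (2 * m) • (LinearMap.mul ℤ ℤ).compl₁₂ (LinearMap.snd ℤ M ℤ) (LinearMap.snd ℤ M ℤ)

@[simp]
theorem sumForm_apply (w z : M × ℤ) : sumForm B m w z = B w.1 z.1 - 2 * m * (w.2 * z.2) := by
  simp [sumForm, mul_assoc]

theorem sumForm_comm (hB : ∀ x y, B x y = B y x) (w z : M × ℤ) :
    sumForm B m w z = sumForm B m z w := by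
  simp [hB w.1, mul_comm w.2]

theorem two_dvd_sumForm_self (hB : ∀ x, 2 ∣ B x x) (w : M × ℤ) : 2 ∣ sumForm B m w w := by
  simpa [mul_assoc] using (hB w.1).sub (dvd_mul_right 2 (m * (w.2 * w.2)))

theorem sumForm_smul_add_smul_delta {k g c : ℤ} (hc : 2 * m * c = k * g) (u x : M × ℤ) :
    sumForm B m (g • u + c • ((0 : M), (1 : ℤ))) x = g * (sumForm B m u x - k * x.2) := by
  simp only [map_add, map_zsmul, LinearMap.add_apply, LinearMap.smul_apply, sumForm_apply,
    map_zero, LinearMap.zero_apply, smul_eq_mul]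
  linear_combination (-x.2) * hc

theorem sumForm_smul_add_smul_delta_self {k g c : ℤ} (hc : 2 * m * c = k * g) (u : M × ℤ) :
    sumForm B m (g • u + c • ((0 : M), (1 : ℤ))) (g • u + c • ((0 : M), (1 : ℤ))) =
      g ^ 2 * (sumForm B m u u - 2 * k * u.2) - k * g * c := by
  rw [sumForm_smul_add_smul_delta hc]
  simp only [map_add, map_zsmul, sumForm_apply, Prod.snd_add, Prod.smul_snd, smul_eq_mul,
    map_zero, mul_one, zero_sub, mul_neg]
  linear_combination (- g * u.2) * hc

end SumForm

theorem exists_smul_sub_eq_iff {N : Type*} [AddCommGroup N] [Module.IsTorsionFree ℤ N] {m : ℤ}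
    (hm : m ≠ 0) {κ : N × ℤ} {k g : ℤ} :
    (∃ w, (2 * m) • κ - (k * g) • ((0 : N), (1 : ℤ)) = (2 * m * g) • w) ↔
      ∃ u c, κ = g • u + c • ((0 : N), (1 : ℤ)) ∧ 2 * m * c = k * g := by
  constructor
  · rintro ⟨w, hw⟩
    obtain ⟨hw₁, hw₂⟩ := Prod.ext_iff.1 hw
    simp only [Prod.fst_sub, Prod.smul_fst, smul_zero, sub_zero, Prod.snd_sub, Prod.smul_snd,
      smul_eq_mul, mul_one] at hw₁ hw₂
    refine ⟨w, κ.2 - g * w.2, Prod.ext ?_ (by simp), by linear_combination hw₂⟩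
    rw [mul_smul (2 * m) g] at hw₁
    simpa using smul_right_injective N (mul_ne_zero two_ne_zero hm) hw₁
  · rintro ⟨u, c, rfl, hc⟩
    refine ⟨u, Prod.ext (by simp [mul_smul]) ?_⟩
    simp only [Prod.snd_sub, Prod.smul_snd, Prod.snd_add, smul_eq_mul]
    linear_combination hc

theorem Int.exists_det_eq_one_and_mul_add_mul_eq_zero (x y : ℤ) :
    ∃ p q r s : ℤ, p * s - q * r = 1 ∧ r * x + s * y = 0 := by
  rcases (Int.gcd x y).eq_zero_or_pos with h0 | hpos
  · obtain ⟨rfl, rfl⟩ := Int.gcd_eq_zero_iff.1 h0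
    exact ⟨1, 0, 0, 1, by ring, by ring⟩
  obtain ⟨d, x', y', -, hco, rfl, rfl⟩ := Int.exists_gcd_one' hpos
  obtain ⟨a, b, hab⟩ := Int.isCoprime_iff_gcd_eq_one.2 hco
  exact ⟨a, b, -y', x', by linear_combination hab, by ring⟩

section PerpUnitPair

variable {n : Type*} [Fintype n]

/-- With `Q i = B (e i) v` and `P i = B (f i) v` for a hyperbolic basis `e, f`, the vectors
`∑ c i • e i` and `∑ d i • f i` form a hyperbolic pair orthogonal to `v`. -/
def PerpUnitPair (Q P : n → ℤ) : Prop :=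
  ∃ c d : n → ℤ, c ⬝ᵥ Q = 0 ∧ d ⬝ᵥ P = 0 ∧ c ⬝ᵥ d = 1

theorem PerpUnitPair.symm {Q P : n → ℤ} (h : PerpUnitPair Q P) : PerpUnitPair P Q := by
  obtain ⟨c, d, hc, hd, hcd⟩ := h
  exact ⟨d, c, hd, hc, by rwa [dotProduct_comm]⟩

theorem PerpUnitPair.of_comp_perm {Q P : n → ℤ} (σ : Equiv.Perm n)
    (h : PerpUnitPair (Q ∘ σ) (P ∘ σ)) : PerpUnitPair Q P := by
  obtain ⟨c, d, hc, hd, hcd⟩ := h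
  refine ⟨c ∘ σ.symm, d ∘ σ.symm, ?_, ?_, ?_⟩
  · rwa [comp_equiv_symm_dotProduct]
  · rwa [comp_equiv_symm_dotProduct]
  · rwa [comp_equiv_symm_dotProduct, Function.comp_assoc, Equiv.symm_comp_self,
      Function.comp_id]

theorem PerpUnitPair.of_apply_eq_zero [DecidableEq n] {Q P : n → ℤ} (i : n) (hQ : Q i = 0)
    (hP : P i = 0) : PerpUnitPair Q P :=
  ⟨Pi.single i 1, Pi.single i 1, by simp [hQ], by simp [hP], by simp⟩

/-- `P` transforms by the inverse transpose, which preserves `c ⬝ᵥ d`. -/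
theorem PerpUnitPair.of_sl2 {Q P : Fin 3 → ℤ} {p q r s : ℤ} (hdet : p * s - q * r = 1)
    (h : PerpUnitPair ![p * Q 0 + q * Q 1, r * Q 0 + s * Q 1, Q 2]
      ![s * P 0 - r * P 1, p * P 1 - q * P 0, P 2]) :
    PerpUnitPair Q P := by
  obtain ⟨c, d, hc, hd, hcd⟩ := h
  refine ⟨![c 0 * p + c 1 * r, c 0 * q + c 1 * s, c 2],
    ![s * d 0 - q * d 1, p * d 1 - r * d 0, d 2], ?_, ?_, ?_⟩ <;>
    simp only [dotProduct, Fin.sum_univ_three, Matrix.cons_val] at hc hd hcd ⊢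
  · linear_combination hc
  · linear_combination hd
  · linear_combination hcd + (c 0 * d 0 + c 1 * d 1) * hdet

theorem PerpUnitPair.of_apply_one_eq_zero_of_apply_two_eq_zero {Q P : Fin 3 → ℤ}
    (h₁ : P 1 = 0) (h₂ : P 2 = 0) : PerpUnitPair Q P := by
  apply of_comp_perm (Equiv.swap 0 2)
  obtain ⟨p, q, r, s, hdet, hkill⟩ := Int.exists_det_eq_one_and_mul_add_mul_eq_zero (Q 2) (Q 1)
  refine of_sl2 hdet (of_apply_eq_zero 1 ?_ ?_) <;>
    simp [Equiv.swap_apply_of_ne_of_ne, h₁, h₂, hkill]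

/-- Two `SL₂` moves bring `Q` to the shape `(x, 0, 0)`, to which the previous lemma applies after
exchanging `Q` and `P`. -/
theorem perpUnitPair_fin_three (Q P : Fin 3 → ℤ) : PerpUnitPair Q P := by
  obtain ⟨p, q, r, s, hdet, hkill⟩ := Int.exists_det_eq_one_and_mul_add_mul_eq_zero (Q 0) (Q 1)
  refine PerpUnitPair.of_sl2 hdet (PerpUnitPair.of_comp_perm (Equiv.swap 1 2) ?_)
  obtain ⟨p', q', r', s', hdet', hkill'⟩ :=
    Int.exists_det_eq_one_and_mul_add_mul_eq_zero (p * Q 0 + q * Q 1) (Q 2)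
  refine PerpUnitPair.of_sl2 hdet' (PerpUnitPair.symm ?_)
  apply PerpUnitPair.of_apply_one_eq_zero_of_apply_two_eq_zero <;>
    simp [Equiv.swap_apply_of_ne_of_ne, hkill, hkill']

end PerpUnitPair

section Lattice

variable {M : Type*} [AddCommGroup M] {B : M →ₗ[ℤ] M →ₗ[ℤ] ℤ}

theorem exists_hyperbolic_pair_orthogonal (e f : Fin 3 → M)
    (hU : ∀ i j, B (e i) (e j) = 0 ∧ B (f i) (f j) = 0 ∧ B (e i) (f j) = if i = j then 1 else 0)
    (v : M) :
    ∃ e' f' : M, B e' e' = 0 ∧ B f' f' = 0 ∧ B e' f' = 1 ∧ B e' v = 0 ∧ B f' v = 0 := by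
  obtain ⟨c, d, hc, hd, hcd⟩ := perpUnitPair_fin_three (fun i => B (e i) v) (fun i => B (f i) v)
  rw [dotProduct_comm] at hcd
  simp only [dotProduct] at hc hd hcd
  refine ⟨∑ i, c i • e i, ∑ i, d i • f i, ?_, ?_, ?_, ?_, ?_⟩ <;>
    simp [map_sum, (hU _ _).1, (hU _ _).2.1, (hU _ _).2.2, hc, hd, hcd]

theorem exists_add_hyperbolic (hB : ∀ x y, B x y = B y x) {e f : M} (he : B e e = 0)
    (hf : B f f = 0) (hef : B e f = 1) (x : M) (n : ℤ) :
    ∃ a b : ℤ, B (x + a • e + b • f) f = 1 ∧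
      B (x + a • e + b • f) (x + a • e + b • f) = B x x + 2 * n := by
  refine ⟨1 - B x f, n - (1 - B x f) * B x e, ?_, ?_⟩ <;>
    simp only [map_add, map_zsmul, LinearMap.add_apply, LinearMap.smul_apply, smul_eq_mul,
      he, hf, hef, hB f e, hB e x, hB f x]
  · ring
  · ring

end Lattice

section Construction

variable {M : Type*} [AddCommGroup M] {B : M →ₗ[ℤ] M →ₗ[ℤ] ℤ} {m : ℤ}

theorem isPrimitive_smul_add_smul_delta {k g c : ℤ} (hc : 2 * m * c = k * g)
    (hgc : IsCoprime g c) {u : M × ℤ} {y : M} (hy : B u.1 y = 1) :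
    IsPrimitive (g • u + c • ((0 : M), (1 : ℤ))) := by
  obtain ⟨a, b, hab⟩ := hgc.add_mul_left_right u.2
  refine .of_apply_eq_one (a • (sumForm B m).flip (y, 0) + b • LinearMap.snd ℤ M ℤ) ?_
  simp only [LinearMap.add_apply, LinearMap.smul_apply, LinearMap.flip_apply,
    sumForm_smul_add_smul_delta hc, sumForm_apply, hy, LinearMap.snd_apply, Prod.snd_add,
    Prod.smul_snd, smul_eq_mul]
  linear_combination hab

theorem dvd_iff_exists_sumForm_smul_add_smul_delta {k g c : ℤ} (hc : 2 * m * c = k * g)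
    {u : M × ℤ} {y : M} (hy : B u.1 y = 1) (t : ℤ) :
    g ∣ t ↔ ∃ w, sumForm B m (g • u + c • ((0 : M), (1 : ℤ))) w = t := by
  simp only [sumForm_smul_add_smul_delta hc]
  constructor
  · rintro ⟨s, rfl⟩
    exact ⟨s • (y, 0), by simp [hy]⟩
  · rintro ⟨w, rfl⟩
    exact dvd_mul_right _ _

theorem exists_sumForm_eq_of_three_hyperbolic_planes (hB : ∀ x y, B x y = B y x)
    (heven : ∀ x, 2 ∣ B x x) (e f : Fin 3 → M)
    (hU : ∀ i j, B (e i) (e j) = 0 ∧ B (f i) (f j) = 0 ∧ B (e i) (f j) = if i = j then 1 else 0)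
    (h v u₀ : M × ℤ) (k : ℤ) :
    ∃ u : M × ℤ, (∃ y, B u.1 y = 1) ∧ sumForm B m u h = sumForm B m v h ∧
      sumForm B m u u - 2 * k * u.2 = sumForm B m u₀ u₀ - 2 * k * u₀.2 := by
  obtain ⟨e', f', he, hf, hef, heh, hfh⟩ := exists_hyperbolic_pair_orthogonal e f hU h.1
  obtain ⟨n, hn⟩ :=
    (two_dvd_sumForm_self (m := m) heven u₀).sub (two_dvd_sumForm_self (m := m) heven v)
  obtain ⟨a, b, hy, hsq⟩ := exists_add_hyperbolic hB he hf hef v.1 (n - k * (u₀.2 - v.2))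
  refine ⟨(v.1 + a • e' + b • f', v.2), ⟨f', hy⟩, by simp [heh, hfh], ?_⟩
  simp only [sumForm_apply] at hn ⊢
  rw [hsq]
  linear_combination -hn

theorem IsPrimitive.isCoprime_snd (hB : Function.Bijective B) {h : M × ℤ} (hh : IsPrimitive h)
    {γ : ℤ} (hdiv : ∀ t, γ ∣ t ↔ ∃ w, sumForm B m h w = t) : IsCoprime γ h.2 := by
  obtain ⟨h', hh'⟩ :=
    exists_eq_smul_of_forall_dvd hB (x := h.1) fun y => (hdiv _).2 ⟨(y, 0), by simp⟩
  exact hh.isCoprime hh' (by simp)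

theorem dvd_of_sumForm_smul_add_smul_delta_eq_zero (hB : ∀ x y, B x y = B y x)
    {h u : M × ℤ} {γ k g c : ℤ} (hc : 2 * m * c = k * g) (hg : g ≠ 0)
    (hdiv : ∀ t, γ ∣ t ↔ ∃ w, sumForm B m h w = t) (hcop : IsCoprime γ h.2)
    (horth : sumForm B m (g • u + c • ((0 : M), (1 : ℤ))) h = 0) : γ ∣ k := by
  rw [sumForm_smul_add_smul_delta hc, mul_eq_zero, sub_eq_zero] at horth
  have hdvd : γ ∣ k * h.2 := (hdiv _).2 ⟨u, by rw [sumForm_comm hB, horth.resolve_left hg]⟩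
  exact hcop.dvd_of_dvd_mul_right hdvd

end Construction

theorem stmt_11_general (Λ₀ : Type) [AddCommGroup Λ₀] [Module ℤ Λ₀]
    (B : Λ₀ →ₗ[ℤ] Λ₀ →ₗ[ℤ] ℤ)
    (hsymm : ∀ x y, B x y = B y x)
    (heven : ∀ x, 2 ∣ B x x)
    (hunimod : Function.Bijective fun x => B x)
    (e f : Fin 3 → Λ₀)
    (hU : ∀ i j, B (e i) (e j) = 0 ∧ B (f i) (f j) = 0 ∧
      B (e i) (f j) = (if i = j then 1 else 0))
    (mt : ℕ) (hmt : 1 ≤ mt)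
    (Bl : Λ₀ × ℤ → Λ₀ × ℤ → ℤ)
    (hBl : ∀ w z, Bl w z = B w.1 z.1 - 2 * (mt : ℤ) * (w.2 * z.2))
    (h : Λ₀ × ℤ)
    (hprimh : ∀ (c : ℤ) (w : Λ₀ × ℤ), h = c • w → IsUnit c)
    (γ : ℕ)
    (hdivh : ∀ t : ℤ, ((γ : ℤ) ∣ t ↔ ∃ w, Bl h w = t))
    (k : ℕ) (l : ℤ)
    (hexists : ∃ (κ : Λ₀ × ℤ) (γκ : ℕ), 0 < γκ ∧
      (∀ (c : ℤ) (w : Λ₀ × ℤ), κ = c • w → IsUnit c) ∧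
      (∀ t : ℤ, ((γκ : ℤ) ∣ t ↔ ∃ w, Bl κ w = t)) ∧
      Bl κ κ = 2 * l ∧
      (∃ w : Λ₀ × ℤ, (2 * (mt : ℤ)) • κ - ((k : ℤ) * (γκ : ℤ)) • ((0 : Λ₀), (1 : ℤ))
        = ((2 * (mt : ℤ)) * (γκ : ℤ)) • w)) :
    (∃ (κ : Λ₀ × ℤ) (γκ : ℕ), 0 < γκ ∧
      (∀ (c : ℤ) (w : Λ₀ × ℤ), κ = c • w → IsUnit c) ∧
      (∀ t : ℤ, ((γκ : ℤ) ∣ t ↔ ∃ w, Bl κ w = t)) ∧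
      Bl κ κ = 2 * l ∧
      (∃ w : Λ₀ × ℤ, (2 * (mt : ℤ)) • κ - ((k : ℤ) * (γκ : ℤ)) • ((0 : Λ₀), (1 : ℤ))
        = ((2 * (mt : ℤ)) * (γκ : ℤ)) • w) ∧
      Bl κ h = 0) ↔ γ ∣ k := by
  obtain rfl := Subsingleton.elim ‹Module ℤ Λ₀› (AddCommGroup.toIntModule Λ₀)
  obtain rfl : Bl = fun w z => sumForm B mt w z := funext₂ fun w z => by rw [hBl, sumForm_apply]
  beta_reduce at hdivh hexists ⊢
  have := isTorsionFree_of_injective hunimod.1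
  have hm : (mt : ℤ) ≠ 0 := by omega
  have hcop : IsCoprime (γ : ℤ) h.2 := IsPrimitive.isCoprime_snd hunimod hprimh hdivh
  rw [← Int.natCast_dvd_natCast]
  constructor
  · rintro ⟨κ, g, hg, -, -, -, hstar, horth⟩
    obtain ⟨u, c, rfl, hc⟩ := (exists_smul_sub_eq_iff hm).1 hstar
    exact dvd_of_sumForm_smul_add_smul_delta_eq_zero hsymm hc (by positivity) hdivh hcop horth
  · intro hγk
    obtain ⟨κ₀, g, hg, hprim₀, -, hsq₀, hstar₀⟩ := hexists
    obtain ⟨u₀, c, rfl, hc⟩ := (exists_smul_sub_eq_iff hm).1 hstar₀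
    have hgc : IsCoprime (g : ℤ) c :=
      IsPrimitive.isCoprime hprim₀ (x := u₀.1) (by simp) (by simp)
    obtain ⟨v, hv⟩ := (hdivh _).1 (dvd_mul_of_dvd_left hγk h.2)
    obtain ⟨u, ⟨y, hy⟩, horth, hsq⟩ :=
      exists_sumForm_eq_of_three_hyperbolic_planes hsymm heven e f hU h v u₀ k (m := mt)
    refine ⟨(g : ℤ) • u + c • ((0 : Λ₀), (1 : ℤ)), g, hg,
      isPrimitive_smul_add_smul_delta hc hgc hy,
      dvd_iff_exists_sumForm_smul_add_smul_delta hc hy, ?_,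
      (exists_smul_sub_eq_iff hm).2 ⟨u, c, rfl, hc⟩, ?_⟩
    · rwa [sumForm_smul_add_smul_delta_self hc, hsq, ← sumForm_smul_add_smul_delta_self hc]
    · rw [sumForm_smul_add_smul_delta hc, horth, sumForm_comm hsymm, hv, sub_self, mul_zero]

/-- Proposition 4.8: in `Λ = Λ₀ ⊕ ℤδ` with `Λ₀` even unimodular containing three
orthogonal hyperbolic planes and `δ² = −2m̃`, for `h ∈ Λ` primitive of divisibility
`γ` and positive square, and integers `0 ≤ k ≤ m̃` and `l` such that some primitive
class with square `2l` and `κ_* = kδ_*` exists, there exists such a primitive `κ`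
orthogonal to `h` iff `γ ∣ k`.  Here `mt` plays the role of `m̃`, `Λ` is modelled
as `Λ₀ × ℤ` with `δ = (0,1)`, divisibility is expressed via the ideal of pairing
values, and `κ_* = kδ_*` via `κ/div(κ) − kδ/(2m̃) ∈ Λ` after clearing denominators. -/
theorem stmt_11 (Λ₀ : Type) [AddCommGroup Λ₀] [Module ℤ Λ₀]
    [Module.Free ℤ Λ₀] [Module.Finite ℤ Λ₀]
    (B : Λ₀ →ₗ[ℤ] Λ₀ →ₗ[ℤ] ℤ)
    (hsymm : ∀ x y, B x y = B y x)
    (heven : ∀ x, 2 ∣ B x x)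
    (hunimod : Function.Bijective fun x => B x)
    (e f : Fin 3 → Λ₀)
    (hU : ∀ i j, B (e i) (e j) = 0 ∧ B (f i) (f j) = 0 ∧
      B (e i) (f j) = (if i = j then 1 else 0))
    (mt : ℕ) (hmt : 1 ≤ mt)
    (Bl : Λ₀ × ℤ → Λ₀ × ℤ → ℤ)
    (hBl : ∀ w z, Bl w z = B w.1 z.1 - 2 * (mt : ℤ) * (w.2 * z.2))
    (h : Λ₀ × ℤ)
    (hprimh : ∀ (c : ℤ) (w : Λ₀ × ℤ), h = c • w → IsUnit c)
    (hpos : 0 < Bl h h)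
    (γ : ℕ) (hγpos : 0 < γ)
    (hdivh : ∀ t : ℤ, ((γ : ℤ) ∣ t ↔ ∃ w, Bl h w = t))
    (k : ℕ) (hk : k ≤ mt) (l : ℤ)
    (hexists : ∃ (κ : Λ₀ × ℤ) (γκ : ℕ), 0 < γκ ∧
      (∀ (c : ℤ) (w : Λ₀ × ℤ), κ = c • w → IsUnit c) ∧
      (∀ t : ℤ, ((γκ : ℤ) ∣ t ↔ ∃ w, Bl κ w = t)) ∧
      Bl κ κ = 2 * l ∧
      (∃ w : Λ₀ × ℤ, (2 * (mt : ℤ)) • κ - ((k : ℤ) * (γκ : ℤ)) • ((0 : Λ₀), (1 : ℤ))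
        = ((2 * (mt : ℤ)) * (γκ : ℤ)) • w)) :
    (∃ (κ : Λ₀ × ℤ) (γκ : ℕ), 0 < γκ ∧
      (∀ (c : ℤ) (w : Λ₀ × ℤ), κ = c • w → IsUnit c) ∧
      (∀ t : ℤ, ((γκ : ℤ) ∣ t ↔ ∃ w, Bl κ w = t)) ∧
      Bl κ κ = 2 * l ∧
      (∃ w : Λ₀ × ℤ, (2 * (mt : ℤ)) • κ - ((k : ℤ) * (γκ : ℤ)) • ((0 : Λ₀), (1 : ℤ))
        = ((2 * (mt : ℤ)) * (γκ : ℤ)) • w) ∧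
      Bl κ h = 0) ↔ γ ∣ k :=
  stmt_11_general Λ₀ B hsymm heven hunimod e f hU mt hmt Bl hBl h hprimh γ hdivh k l hexists
end

section
/- Let Λ = Λ₀ ⊕ Zu ⊕ Zv where Λ₀ is even unimodular containing a hyperbolic plane and u² = v² = −2, (u,v) = 0 (the OG₆ lattice). Let n ≥ 1. There exists a primitive h ∈ Λ with h² = 2n and div(h) = 2 if and only if n ≡ 2 or 3 (mod 4). -/
/-!
If `h = (x, b, c)` has divisibility 2, then `2 ∣ B x z` for all `z`, so by unimodularity `x = 2y`
and `h² = 4y² - 2b² - 2c² = 2(4d - b² - c²)` with `y² = 2d`. Primitivity forbids `b` and `c` to be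
both even, so `b² + c² ≡ 1, 2 (mod 4)` and `n ≡ 3, 2 (mod 4)`. Conversely, the hyperbolic plane
contains `x` with `x² = 2k` for every `k`, and `h = (2x, 1, c)` is primitive of divisibility 2 with
`h² = 2(4k - 1 - c²)`; taking `c ∈ {0, 1}` realises both residues.
-/

/-- `(x, b, c)` stands for `x + bu + cv` in `M ⊕ ℤu ⊕ ℤv`, where `u² = v² = -2` and `(u, v) = 0`. -/
def og6Pairing {M : Type*} [AddCommGroup M] (B : M →ₗ[ℤ] M →ₗ[ℤ] ℤ) (w z : M × ℤ × ℤ) : ℤ :=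
  B w.1 z.1 - 2 * (w.2.1 * z.2.1) - 2 * (w.2.2 * z.2.2)

theorem Int.four_mul_sub_sq_sub_sq_emod_four {b c : ℤ} (hbc : ¬(2 ∣ b ∧ 2 ∣ c)) (d : ℤ) :
    (4 * d - b ^ 2 - c ^ 2) % 4 = 2 ∨ (4 * d - b ^ 2 - c ^ 2) % 4 = 3 := by
  have sq_emod_four (a : ℤ) : 2 ∣ a ∧ a ^ 2 % 4 = 0 ∨ ¬2 ∣ a ∧ a ^ 2 % 4 = 1 := by
    by_cases ha : 2 ∣ a
    · exact .inl ⟨ha, Int.emod_eq_zero_of_dvd (by simpa using pow_dvd_pow_of_dvd ha 2)⟩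
    · refine .inr ⟨ha, Int.sq_mod_four_eq_one_of_odd ?_⟩
      rwa [← Int.not_even_iff_odd, even_iff_two_dvd]
  rcases sq_emod_four b with hb | hb <;> rcases sq_emod_four c with hc | hc <;> omega

namespace LinearMap

variable {M : Type*} [AddCommGroup M] (B : M →ₗ[ℤ] M →ₗ[ℤ] ℤ)

theorem exists_eq_smul_of_forall_dvd (hB : Function.Bijective B) {m : ℤ} {x : M}
    (hx : ∀ z, m ∣ B x z) : ∃ y, x = m • y := by
  let φ : M →ₗ[ℤ] ℤ :=
    { toFun := fun z => B x z / m
      map_add' := fun z z' => by rw [map_add, Int.add_ediv_of_dvd_left (hx z)]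
      map_smul' := fun a z => by
        rw [map_smul, smul_eq_mul, Int.mul_ediv_assoc _ (hx z), RingHom.id_apply, Int.zsmul_eq_mul] }
  obtain ⟨y, hy⟩ := hB.2 φ
  refine ⟨y, hB.1 (ext fun z => ?_)⟩
  change B x z = B (m • y) z
  rw [map_smul, smul_apply, hy, Int.zsmul_eq_mul]
  exact (Int.mul_ediv_cancel' (hx z)).symm

theorem exists_apply_self_eq_two_mul {e f : M} (he : B e e = 0) (hf : B f f = 0)
    (hef : B e f = 1) (hfe : B f e = 1) (k : ℤ) : ∃ x, B x x = 2 * k :=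
  ⟨e + k • f, by
    simp only [map_add, map_smul, add_apply, smul_apply, he, hf, hef, hfe, Int.zsmul_eq_mul]
    ring⟩

end LinearMap

section og6Pairing

variable {M : Type*} [AddCommGroup M] (B : M →ₗ[ℤ] M →ₗ[ℤ] ℤ)

theorem og6Pairing_self_emod_eight (hB : Function.Bijective B) (heven : ∀ x, 2 ∣ B x x)
    {h : M × ℤ × ℤ} (hprim : ∀ (c : ℤ) w, h = c • w → IsUnit c)
    (hdiv : ∀ w, 2 ∣ og6Pairing B h w) :
    og6Pairing B h h % 8 = 4 ∨ og6Pairing B h h % 8 = 6 := by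
  obtain ⟨x, b, c⟩ := h
  obtain ⟨y, rfl⟩ := B.exists_eq_smul_of_forall_dvd hB fun z => by
    simpa [og6Pairing] using hdiv (z, 0, 0)
  obtain ⟨d, hd⟩ := heven y
  have hbc : ¬(2 ∣ b ∧ 2 ∣ c) := by
    rintro ⟨⟨p, rfl⟩, ⟨q, rfl⟩⟩
    have := hprim 2 (y, p, q) (by simp)
    norm_num [Int.isUnit_iff] at this
  have hsq : og6Pairing B ((2 : ℤ) • y, b, c) ((2 : ℤ) • y, b, c) =
      2 * (4 * d - b ^ 2 - c ^ 2) := by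
    simp only [og6Pairing, map_smul, LinearMap.smul_apply, hd, Int.zsmul_eq_mul]
    ring
  rw [hsq]
  have := Int.four_mul_sub_sq_sub_sq_emod_four hbc d
  omega

theorem og6Pairing_two_smul_one_primitive_div_two (x : M) (c : ℤ) :
    let h : M × ℤ × ℤ := ((2 : ℤ) • x, 1, c)
    (∀ (a : ℤ) w, h = a • w → IsUnit a) ∧
      og6Pairing B h h = 2 * (2 * B x x - 1 - c ^ 2) ∧
      ∀ t : ℤ, 2 ∣ t ↔ ∃ w, og6Pairing B h w = t := by
  refine ⟨fun a w hw => ?_, ?_, fun t => ⟨?_, ?_⟩⟩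
  · have h1 : 1 = a * w.2.1 := congrArg (fun z => z.2.1) hw
    exact IsUnit.of_mul_eq_one (a := a) w.2.1 h1.symm
  · simp only [og6Pairing, map_smul, LinearMap.smul_apply, Int.zsmul_eq_mul]
    ring
  · rintro ⟨s, rfl⟩
    exact ⟨(0, -s, 0), by simp [og6Pairing]⟩
  · rintro ⟨w, rfl⟩
    refine ⟨B x w.1 - w.2.1 - c * w.2.2, ?_⟩
    simp only [og6Pairing, map_smul, LinearMap.smul_apply, Int.zsmul_eq_mul]
    ring

end og6Pairing

theorem stmt_14_general (Λ₀ : Type) [AddCommGroup Λ₀] [Module ℤ Λ₀]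
    (B : Λ₀ →ₗ[ℤ] Λ₀ →ₗ[ℤ] ℤ)
    (hsymm : ∀ x y, B x y = B y x)
    (heven : ∀ x, 2 ∣ B x x)
    (hunimod : Function.Bijective fun x => B x)
    (e f : Λ₀) (he : B e e = 0) (hf : B f f = 0) (hef : B e f = 1)
    (Bl : Λ₀ × ℤ × ℤ → Λ₀ × ℤ × ℤ → ℤ)
    (hBl : ∀ w z, Bl w z = B w.1 z.1 - 2 * (w.2.1 * z.2.1) - 2 * (w.2.2 * z.2.2))
    (n : ℕ) :
    (∃ h : Λ₀ × ℤ × ℤ,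
        (∀ (c : ℤ) (w : Λ₀ × ℤ × ℤ), h = c • w → IsUnit c) ∧
        Bl h h = 2 * n ∧
        (∀ t : ℤ, ((2 : ℤ) ∣ t ↔ ∃ w, Bl h w = t))) ↔
      (n % 4 = 2 ∨ n % 4 = 3) := by
  obtain rfl : ‹Module ℤ Λ₀› = AddCommGroup.toIntModule Λ₀ := Subsingleton.elim _ _
  obtain rfl : Bl = og6Pairing B := funext fun w => funext (hBl w)
  constructor
  · rintro ⟨h, hprim, hsq, hdiv⟩
    have := og6Pairing_self_emod_eight B hunimod heven hprim fun w => (hdiv _).2 ⟨w, rfl⟩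
    omega
  · intro hmod
    obtain ⟨k, c, hn⟩ : ∃ k c : ℤ, (n : ℤ) = 4 * k - 1 - c ^ 2 := by
      rcases hmod with h | h
      · exact ⟨n / 4 + 1, 1, by omega⟩
      · exact ⟨n / 4 + 1, 0, by omega⟩
    obtain ⟨x, hx⟩ := B.exists_apply_self_eq_two_mul he hf hef (hsymm f e ▸ hef) k
    obtain ⟨hprim, hsq, hdiv⟩ := og6Pairing_two_smul_one_primitive_div_two B x c
    exact ⟨_, hprim, by rw [hsq, hx, hn]; ring, hdiv⟩

/-- Proposition 3.6 (OG₆ case): in `Λ = Λ₀ ⊕ ℤu ⊕ ℤv` with `Λ₀` even unimodular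
containing a hyperbolic plane, `u² = v² = −2`, `(u,v) = 0`, there exists a primitive
`h` with `h² = 2n` and `div(h) = 2` iff `n ≡ 2` or `3 (mod 4)`.  `Λ` is modelled as
`Λ₀ × ℤ × ℤ` and divisibility via the ideal of pairing values. -/
theorem stmt_14 (Λ₀ : Type) [AddCommGroup Λ₀] [Module ℤ Λ₀]
    [Module.Free ℤ Λ₀] [Module.Finite ℤ Λ₀]
    (B : Λ₀ →ₗ[ℤ] Λ₀ →ₗ[ℤ] ℤ)
    (hsymm : ∀ x y, B x y = B y x)
    (heven : ∀ x, 2 ∣ B x x)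
    (hunimod : Function.Bijective fun x => B x)
    (e f : Λ₀) (he : B e e = 0) (hf : B f f = 0) (hef : B e f = 1)
    (Bl : Λ₀ × ℤ × ℤ → Λ₀ × ℤ × ℤ → ℤ)
    (hBl : ∀ w z, Bl w z = B w.1 z.1 - 2 * (w.2.1 * z.2.1) - 2 * (w.2.2 * z.2.2))
    (n : ℕ) (hn : 1 ≤ n) :
    (∃ h : Λ₀ × ℤ × ℤ,
        (∀ (c : ℤ) (w : Λ₀ × ℤ × ℤ), h = c • w → IsUnit c) ∧
        Bl h h = 2 * n ∧
        (∀ t : ℤ, ((2 : ℤ) ∣ t ↔ ∃ w, Bl h w = t))) ↔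
      (n % 4 = 2 ∨ n % 4 = 3) :=
  stmt_14_general Λ₀ B hsymm heven hunimod e f he hf hef Bl hBl n
end

section
/- Let Λ = Λ₀ ⊕ M where Λ₀ is even unimodular containing a hyperbolic plane and M has Gram matrix [[−6,3],[3,−2]] in basis u, v (the OG₁₀ lattice). Let n ≥ 1. There exists a primitive h ∈ Λ with h² = 2n and div(h) = 3 if and only if n ≡ 6 (mod 9). -/
/-!
If `h = (X, p, Q)` has divisibility 3, pairing with `Λ₀` and with `v` shows `3 ∣ X` (unimodularity)
and `3 ∣ Q`, so primitivity forces `3 ∤ p`. Writing `X = 3x`, `Q = 3q` gives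
`h² = 9x² − 6p² + 18pq − 18q²` with `x²` even and `p² ≡ 1 (mod 3)`, hence `h² ≡ 12 (mod 18)`.
Conversely, for `n = 9m + 6` take `h = 3x + u` with `x = (m + 1)e + f` in the hyperbolic plane:
then `h² = 9x² − 6 = 18(m + 1) − 6`, `(h, Λ) ⊆ 3ℤ` and `(h, v) = 3`.
-/

theorem Int.sq_sub_one_dvd_three_of_not_dvd {p : ℤ} (hp : ¬ 3 ∣ p) : 3 ∣ p ^ 2 - 1 := by
  obtain ⟨k, rfl | rfl⟩ : ∃ k, p = 3 * k + 1 ∨ p = 3 * k + 2 := ⟨p / 3, by omega⟩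
  · exact ⟨3 * k ^ 2 + 2 * k, by ring⟩
  · exact ⟨3 * k ^ 2 + 4 * k + 1, by ring⟩

section Unimodular

variable {M : Type*} [AddCommGroup M] [Module ℤ M]

theorem LinearMap.exists_eq_smul_of_forall_dvd_s15 (φ : M →ₗ[ℤ] ℤ) {k : ℤ} (h : ∀ y, k ∣ φ y) :
    ∃ ψ : M →ₗ[ℤ] ℤ, φ = k • ψ := by
  refine ⟨{ toFun := fun y => φ y / k, map_add' := ?_, map_smul' := ?_ }, ?_⟩
  · intro a b
    simp only [map_add, Int.add_ediv_of_dvd_left (h a)]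
  · intro c a
    simp only [map_smul, smul_eq_mul, RingHom.id_apply, Int.mul_ediv_assoc c (h a)]
  · ext y
    exact (Int.mul_ediv_cancel' (h y)).symm

theorem exists_eq_smul_of_forall_dvd_apply {B : M →ₗ[ℤ] M →ₗ[ℤ] ℤ} (hB : Function.Bijective B)
    {x : M} {k : ℤ} (h : ∀ y, k ∣ B x y) : ∃ x₀, x = k • x₀ := by
  obtain ⟨ψ, hψ⟩ := (B x).exists_eq_smul_of_forall_dvd_s15 h
  obtain ⟨x₀, rfl⟩ := hB.2 ψ
  exact ⟨x₀, hB.1 (by rw [hψ, map_zsmul])⟩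

end Unimodular

theorem isUnit_of_eq_smul_of_fst_snd_eq_one {α : Type*} [SMul ℤ α] {h : α × ℤ × ℤ}
    (h1 : h.2.1 = 1) {c : ℤ} {w : α × ℤ × ℤ} (hcw : h = c • w) : IsUnit c :=
  IsUnit.of_mul_eq_one (a := c) w.2.1 (by rw [← h1, hcw]; rfl)

section OG10

variable {Λ₀ : Type} [AddCommGroup Λ₀] [Module ℤ Λ₀] {B : Λ₀ →ₗ[ℤ] Λ₀ →ₗ[ℤ] ℤ}

/-- The form of `Λ₀ ⊕ M`, the last two coordinates being those in the basis `u, v` of `M`. -/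
def og10Form (B : Λ₀ →ₗ[ℤ] Λ₀ →ₗ[ℤ] ℤ) (w z : Λ₀ × ℤ × ℤ) : ℤ :=
  B w.1 z.1 - 6 * (w.2.1 * z.2.1) + 3 * (w.2.1 * z.2.2) + 3 * (w.2.2 * z.2.1) - 2 * (w.2.2 * z.2.2)

theorem exists_three_smul_of_forall_three_dvd_og10Form (hB : Function.Bijective B)
    {X : Λ₀} {p Q : ℤ} (h : ∀ w, 3 ∣ og10Form B (X, p, Q) w) :
    ∃ (x : Λ₀) (q : ℤ), X = (3 : ℤ) • x ∧ Q = 3 * q := by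
  obtain ⟨x, hx⟩ := exists_eq_smul_of_forall_dvd_apply hB (k := 3) fun y => by
    simpa [og10Form] using h (y, 0, 0)
  have hv : 3 ∣ 3 * p - 2 * Q := by simpa [og10Form] using h (0, 0, 1)
  exact ⟨x, Q / 3, hx, by omega⟩

theorem og10Form_self_emod_eighteen (hB : Function.Bijective B) (heven : ∀ x, 2 ∣ B x x)
    {h : Λ₀ × ℤ × ℤ} (hprim : ∀ (c : ℤ) (w : Λ₀ × ℤ × ℤ), h = c • w → IsUnit c)
    (hdiv : ∀ w, 3 ∣ og10Form B h w) : og10Form B h h % 18 = 12 := by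
  obtain ⟨X, p, Q⟩ := h
  obtain ⟨x, q, rfl, rfl⟩ := exists_three_smul_of_forall_three_dvd_og10Form hB hdiv
  have hp : ¬ 3 ∣ p := by
    rintro ⟨p', rfl⟩
    have := Int.isUnit_iff.1 (hprim 3 (x, p', q) (by simp [Prod.smul_mk]))
    omega
  have hself : og10Form B ((3 : ℤ) • x, p, 3 * q) ((3 : ℤ) • x, p, 3 * q)
      = 9 * B x x - 6 * p ^ 2 + 18 * (p * q) - 18 * q ^ 2 := by
    simp only [og10Form, map_zsmul, LinearMap.smul_apply, smul_eq_mul]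
    ring
  have := heven x
  have := Int.sq_sub_one_dvd_three_of_not_dvd hp
  omega

theorem og10Form_smul_add_u_apply (k : ℤ) (x y : Λ₀) (c d : ℤ) :
    og10Form B (k • x, 1, 0) (y, c, d) = k * B x y - 6 * c + 3 * d := by
  simp only [og10Form, map_zsmul, LinearMap.smul_apply, smul_eq_mul]
  ring

theorem apply_smul_add_self_of_hyperbolic (hsymm : ∀ x y, B x y = B y x) {e f : Λ₀}
    (he : B e e = 0) (hf : B f f = 0) (hef : B e f = 1) (a : ℤ) :
    B (a • e + f) (a • e + f) = 2 * a := by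
  simp only [map_add, map_zsmul, LinearMap.add_apply, LinearMap.smul_apply, smul_eq_mul,
    he, hf, hef, hsymm f e]
  ring

end OG10

theorem stmt_15_general (Λ₀ : Type) [AddCommGroup Λ₀] [Module ℤ Λ₀]
    (B : Λ₀ →ₗ[ℤ] Λ₀ →ₗ[ℤ] ℤ)
    (hsymm : ∀ x y, B x y = B y x)
    (heven : ∀ x, 2 ∣ B x x)
    (hunimod : Function.Bijective fun x => B x)
    (e f : Λ₀) (he : B e e = 0) (hf : B f f = 0) (hef : B e f = 1)
    (Bl : Λ₀ × ℤ × ℤ → Λ₀ × ℤ × ℤ → ℤ)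
    (hBl : ∀ w z, Bl w z = B w.1 z.1 - 6 * (w.2.1 * z.2.1) + 3 * (w.2.1 * z.2.2)
      + 3 * (w.2.2 * z.2.1) - 2 * (w.2.2 * z.2.2))
    (n : ℕ) :
    (∃ h : Λ₀ × ℤ × ℤ,
        (∀ (c : ℤ) (w : Λ₀ × ℤ × ℤ), h = c • w → IsUnit c) ∧
        Bl h h = 2 * n ∧
        (∀ t : ℤ, ((3 : ℤ) ∣ t ↔ ∃ w, Bl h w = t))) ↔
      n % 9 = 6 := by
  obtain rfl : Bl = og10Form B := funext₂ hBl
  constructor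
  · rintro ⟨h, hprim, hsq, hdiv⟩
    have := og10Form_self_emod_eighteen hunimod heven hprim fun w => (hdiv _).2 ⟨w, rfl⟩
    omega
  · intro hn9
    obtain ⟨m, rfl⟩ : ∃ m : ℕ, n = 9 * m + 6 := ⟨n / 9, by omega⟩
    set x := (m + 1 : ℤ) • e + f
    refine ⟨((3 : ℤ) • x, 1, 0), fun _ _ => isUnit_of_eq_smul_of_fst_snd_eq_one rfl, ?_,
      fun t => ⟨?_, ?_⟩⟩
    · rw [og10Form_smul_add_u_apply, map_zsmul, smul_eq_mul,
        apply_smul_add_self_of_hyperbolic hsymm he hf hef]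
      push_cast
      ring
    · rintro ⟨s, rfl⟩
      exact ⟨(0, 0, s), by simp [og10Form]⟩
    · rintro ⟨⟨y, c, d⟩, rfl⟩
      rw [og10Form_smul_add_u_apply]
      exact ⟨B x y - 2 * c + d, by ring⟩

/-- Proposition 3.6 (OG₁₀ case): in `Λ = Λ₀ ⊕ M` with `Λ₀` even unimodular containing
a hyperbolic plane and `M` of Gram matrix `[[−6,3],[3,−2]]` in the basis `u, v`, there
exists a primitive `h` with `h² = 2n` and `div(h) = 3` iff `n ≡ 6 (mod 9)`.  `Λ` is
modelled as `Λ₀ × ℤ × ℤ` and divisibility via the ideal of pairing values. -/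
theorem stmt_15 (Λ₀ : Type) [AddCommGroup Λ₀] [Module ℤ Λ₀]
    [Module.Free ℤ Λ₀] [Module.Finite ℤ Λ₀]
    (B : Λ₀ →ₗ[ℤ] Λ₀ →ₗ[ℤ] ℤ)
    (hsymm : ∀ x y, B x y = B y x)
    (heven : ∀ x, 2 ∣ B x x)
    (hunimod : Function.Bijective fun x => B x)
    (e f : Λ₀) (he : B e e = 0) (hf : B f f = 0) (hef : B e f = 1)
    (Bl : Λ₀ × ℤ × ℤ → Λ₀ × ℤ × ℤ → ℤ)
    (hBl : ∀ w z, Bl w z = B w.1 z.1 - 6 * (w.2.1 * z.2.1) + 3 * (w.2.1 * z.2.2)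
      + 3 * (w.2.2 * z.2.1) - 2 * (w.2.2 * z.2.2))
    (n : ℕ) (hn : 1 ≤ n) :
    (∃ h : Λ₀ × ℤ × ℤ,
        (∀ (c : ℤ) (w : Λ₀ × ℤ × ℤ), h = c • w → IsUnit c) ∧
        Bl h h = 2 * n ∧
        (∀ t : ℤ, ((3 : ℤ) ∣ t ↔ ∃ w, Bl h w = t))) ↔
      n % 9 = 6 :=
  stmt_15_general Λ₀ B hsymm heven hunimod e f he hf hef Bl hBl n
end

section
/- Let m̃, n, γ be positive integers with γ | gcd(2m̃, 2n), and suppose for every prime p | γ the existence conditions hold (so a primitive vector of square 2n and divisibility γ exists in Λ = Λ₀ ⊕ Zδ, δ² = −2m̃, Λ₀ even unimodular with three hyperbolic planes). Then the number of residues b modulo γ with gcd(b, γ) = 1 and γ² | b²m̃ + n equals ∏_{p | γ} M_p, where for odd p with β = v_p(γ), α = min(v_p(m̃), v_p(n)): M_p = (p−1)p^{β−1} if β ≤ α/2 and M_p = 2p^{α−β} if β > α/2; and M_2 = 2^{β−1} if β ≤ α/2 + 1 and M_2 = 2^{α+2−β} if β > α/2 + 1 (β = v_2(γ), α = min(v_2(m̃),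 v_2(n))). -/
/-!
Since `γ ∣ 2m̃`, whether `b` is counted depends only on `b mod γ`, so by the Chinese remainder
theorem the count is multiplicative in `γ` and it suffices to treat `γ = p^β`. If `p^{2β}` divides
both `m̃` and `n`, every unit is counted and the answer is `φ(p^β)`. Otherwise the existence
conditions force `v_p(m̃) = v_p(n) = α` and provide a solution `x`; dividing by `p^α` turns the
condition into `p^k ∣ b²m₁ + n₁` with `k = 2β - α`, that is `p^k ∣ b² - x²`. For odd `p` this means
`b ≡ ±x (mod p^k)`, and for `p = 2`, `k ≥ 3` it means `b ≡ ±x (mod 2^{k-1})`, which gives two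
residues per period; for `p = 2`, `k ≤ 3` every odd `b` works since odd squares are `1 mod 8`.
-/

open Finset Function

namespace Nat

theorem count_congr {p q : ℕ → Prop} [DecidablePred p] [DecidablePred q]
    (h : ∀ k, p k ↔ q k) (n : ℕ) : count p n = count q n := by
  simp only [count_eq_card_filter_range]
  exact congrArg card (filter_congr fun k _ ↦ h k)

theorem count_mul_of_periodic {P : ℕ → Prop} [DecidablePred P] {M : ℕ} (hP : Periodic P M)
    (d : ℕ) : count P (d * M) = d * count P M := by
  induction d with
  | zero => simp
  | succ d ih =>
    have hshift : (fun k ↦ P (d * M + k)) = P := funext fun k ↦ by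
      rw [add_comm]; exact hP.nat_mul d k
    rw [succ_mul, count_add, ih, succ_mul]
    simp only [hshift]

theorem count_and_of_coprime {a b : ℕ} (hab : a.Coprime b) {P Q : ℕ → Prop} [DecidablePred P]
    [DecidablePred Q] (hP : Periodic P a) (hQ : Periodic Q b) :
    count (fun x ↦ P x ∧ Q x) (a * b) = count P a * count Q b := by
  simp only [count_eq_card_filter_range, ← card_product]
  refine card_nbij' (fun x ↦ (x % a, x % b)) (fun y ↦ chineseRemainder hab y.1 y.2) ?_ ?_ ?_ ?_
  · intro x hx
    simp only [coe_filter, mem_range, Set.mem_ofPred_eq, coe_product, Set.mem_prod] at hx ⊢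
    have ha : a ≠ 0 := by rintro rfl; simp at hx
    have hb : b ≠ 0 := by rintro rfl; simp at hx
    exact ⟨⟨mod_lt _ (pos_of_ne_zero ha), (hP.map_mod_nat x).symm ▸ hx.2.1⟩,
      ⟨mod_lt _ (pos_of_ne_zero hb), (hQ.map_mod_nat x).symm ▸ hx.2.2⟩⟩
  · rintro ⟨i, j⟩ hy
    simp only [coe_filter, mem_range, Set.mem_ofPred_eq, coe_product, Set.mem_prod] at hy ⊢
    obtain ⟨⟨hi, hPi⟩, hj, hQj⟩ := hy
    have hcr := (chineseRemainder hab i j).prop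
    refine ⟨chineseRemainder_lt_mul hab i j (by omega) (by omega), ?_, ?_⟩
    · rw [← hP.map_mod_nat, hcr.1, mod_eq_of_lt hi]; exact hPi
    · rw [← hQ.map_mod_nat, hcr.2, mod_eq_of_lt hj]; exact hQj
  · intro x hx
    simp only [coe_filter, mem_range, Set.mem_ofPred_eq] at hx
    have hlt := chineseRemainder_lt_mul hab (x % a) (x % b) (by rintro rfl; simp at hx)
      (by rintro rfl; simp at hx)
    exact ((chineseRemainder_modEq_unique hab (mod_modEq x a).symm
      (mod_modEq x b).symm).eq_of_lt_of_lt hx.1 hlt).symm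
  · rintro ⟨i, j⟩ hy
    simp only [coe_filter, mem_range, Set.mem_ofPred_eq, coe_product, Set.mem_prod] at hy
    have hcr := (chineseRemainder hab i j).prop
    simp only [Prod.mk.injEq]
    exact ⟨Eq.trans hcr.1 (mod_eq_of_lt hy.1.1), Eq.trans hcr.2 (mod_eq_of_lt hy.2.1)⟩

theorem eq_prod_primeFactors_of_mul {β : Type*} [CommMonoid β] {f : ℕ → β} {N : ℕ}
    (hmul : ∀ a b, a ∣ N → b ∣ N → a.Coprime b → f (a * b) = f a * f b) (h1 : f 1 = 1)
    {n : ℕ} (hn : n ≠ 0) (hnN : n ∣ N) :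
    f n = ∏ p ∈ n.primeFactors, f (p ^ n.factorization p) := by
  have key := multiplicative_factorization (fun d ↦ f (gcd N d))
    (fun a b hab ↦ by
      rw [hab.gcd_mul N]
      exact hmul _ _ (gcd_dvd_left _ _) (gcd_dvd_left _ _) (hab.gcd_both N N)) (by simpa) hn
  simp only [gcd_eq_right hnN] at key
  rw [key, Finsupp.prod, support_factorization]
  refine prod_congr rfl fun p hp ↦ ?_
  rw [gcd_eq_right ((ordProj_dvd n p).trans hnN)]

end Nat

theorem Int.dvd_sub_iff_eq_emod {M b y : ℤ} (hb0 : 0 ≤ b) (hbM : b < M) :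
    M ∣ b - y ↔ b = y % M := by
  rw [← Int.modEq_iff_dvd, Int.ModEq, Int.emod_eq_of_lt hb0 hbM, eq_comm]

theorem Nat.count_dvd_sub_or_dvd_add {M : ℕ} (hM : M ≠ 0) {x : ℤ} (hx : ¬ (M : ℤ) ∣ 2 * x)
    (d : ℕ) : count (fun b : ℕ ↦ (M : ℤ) ∣ b - x ∨ (M : ℤ) ∣ b + x) (d * M) = 2 * d := by
  have hperiodic : Periodic (fun b : ℕ ↦ (M : ℤ) ∣ b - x ∨ (M : ℤ) ∣ b + x) M := fun b ↦ by
    simp only [Nat.cast_add, add_sub_right_comm, add_right_comm _ (M : ℤ), dvd_add_self_right]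
  have hM0 : (0 : ℤ) < M := by omega
  have hroot : ∀ y : ℤ, ∀ b < M, (M : ℤ) ∣ b - y ↔ b = (y % M).toNat := fun y b hb ↦ by
    rw [Int.dvd_sub_iff_eq_emod (by positivity) (by omega)]
    have := Int.emod_nonneg y hM0.ne'
    omega
  have hlt : ∀ y : ℤ, (y % M).toNat < M := fun y ↦ by
    have := Int.emod_lt_of_pos y hM0
    omega
  have hne : (x % M).toNat ≠ (-x % M).toNat := fun h ↦ hx <| by
    have h' : x % M = -x % M := by
      have := Int.emod_nonneg x hM0.ne'
      have := Int.emod_nonneg (-x) hM0.ne'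
      omega
    simpa [two_mul] using (Int.ModEq.dvd h'.symm)
  rw [count_mul_of_periodic hperiodic, mul_comm, count_eq_card_filter_range, ← card_pair hne]
  congr 2
  ext b
  simp only [mem_filter, mem_range, mem_insert, mem_singleton, ← sub_neg_eq_add]
  constructor
  · rintro ⟨hb, h | h⟩
    · exact .inl ((hroot x b hb).1 h)
    · exact .inr ((hroot (-x) b hb).1 h)
  · rintro (rfl | rfl)
    · exact ⟨hlt x, .inl ((hroot _ _ (hlt x)).2 rfl)⟩
    · exact ⟨hlt (-x), .inr ((hroot _ _ (hlt (-x))).2 rfl)⟩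

theorem Prime.pow_dvd_sq_sub_sq_iff {R : Type*} [CommRing R] [IsDomain R] {p x : R}
    (hp : Prime p) (hx : ¬ p ∣ 2 * x) (k : ℕ) (b : R) :
    p ^ k ∣ b ^ 2 - x ^ 2 ↔ p ^ k ∣ b - x ∨ p ^ k ∣ b + x := by
  rw [sq_sub_sq]
  refine ⟨fun h ↦ ?_, ?_⟩
  · by_cases hsub : p ∣ b - x
    · have hadd : ¬ p ∣ b + x := fun hadd ↦ hx <| by
        simpa [two_mul, add_sub_sub_cancel] using dvd_sub hadd hsub
      exact .inl (hp.pow_dvd_of_dvd_mul_left k hadd h)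
    · exact .inr (hp.pow_dvd_of_dvd_mul_right k hsub h)
  · rintro (h | h)
    · exact dvd_mul_of_dvd_right h _
    · exact dvd_mul_of_dvd_left h _

theorem Int.two_pow_add_two_dvd_sq_sub_sq_iff {x : ℤ} (hx : Odd x) (k : ℕ) (b : ℤ) :
    2 ^ (k + 2) ∣ b ^ 2 - x ^ 2 ↔ 2 ^ (k + 1) ∣ b - x ∨ 2 ^ (k + 1) ∣ b + x := by
  have hpow : (2 : ℤ) ^ (k + 2) = 2 * 2 ^ (k + 1) := by ring
  refine ⟨fun h ↦ ?_, ?_⟩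
  · have hsq : Even (b ^ 2 - x ^ 2) :=
      even_iff_two_dvd.mpr ((dvd_pow_self 2 (by omega)).trans h)
    obtain ⟨u, hu⟩ : Even (b - x) := by
      simpa [Int.even_sub, Int.even_pow, parity_simps] using hsq
    have hb : b = x + 2 * u := by omega
    have hu' : (2 : ℤ) ^ k ∣ u * (u + x) := by
      have e : b ^ 2 - x ^ 2 = 4 * (u * (u + x)) := by rw [hb]; ring
      rw [e, show (2 : ℤ) ^ (k + 2) = 4 * 2 ^ k by ring] at h
      exact (mul_dvd_mul_iff_left (by norm_num)).mp h
    have hpow' : (2 : ℤ) ^ (k + 1) = 2 * 2 ^ k := pow_succ' 2 k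
    rcases Int.even_or_odd u with heven | hodd
    · have hux : ¬ (2 : ℤ) ∣ u + x := by
        rw [← even_iff_two_dvd, Int.not_even_iff_odd]; exact heven.add_odd hx
      left
      rw [hpow', show b - x = 2 * u by omega]
      exact mul_dvd_mul_left 2 (Int.prime_two.pow_dvd_of_dvd_mul_right k hux hu')
    · have hu2 : ¬ (2 : ℤ) ∣ u := by rw [← even_iff_two_dvd, Int.not_even_iff_odd]; exact hodd
      right
      rw [hpow', show b + x = 2 * (u + x) by omega]
      exact mul_dvd_mul_left 2 (Int.prime_two.pow_dvd_of_dvd_mul_left k hu2 hu')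
  · have h2 : (2 : ℤ) ∣ 2 ^ (k + 1) := dvd_pow_self 2 k.succ_ne_zero
    rintro (h | h)
    · rw [sq_sub_sq, hpow]
      refine mul_dvd_mul ?_ h
      rw [show b + x = (b - x) + 2 * x by ring]
      exact dvd_add (h2.trans h) (dvd_mul_right 2 x)
    · rw [sq_sub_sq, hpow, mul_comm (b + x)]
      refine mul_dvd_mul ?_ h
      rw [show b - x = (b + x) - 2 * x by ring]
      exact dvd_sub (h2.trans h) (dvd_mul_right 2 x)

theorem dvd_sq_mul_add_iff_dvd_sq_sub_sq {R : Type*} [CommRing R] {q m₁ n₁ x : R}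
    (hq : IsCoprime q m₁) (hx : q ∣ x ^ 2 * m₁ + n₁) (b : R) :
    q ∣ b ^ 2 * m₁ + n₁ ↔ q ∣ b ^ 2 - x ^ 2 := by
  rw [show b ^ 2 * m₁ + n₁ = (b ^ 2 - x ^ 2) * m₁ + (x ^ 2 * m₁ + n₁) by ring, dvd_add_left hx]
  exact ⟨hq.dvd_of_dvd_mul_right, (dvd_mul_of_dvd_left · m₁)⟩

theorem not_dvd_of_pow_dvd_sq_mul_add {R : Type*} [CommRing R] {p m₁ n₁ x : R} {k : ℕ}
    (hk : k ≠ 0) (hn₁ : ¬ p ∣ n₁) (hx : p ^ k ∣ x ^ 2 * m₁ + n₁) : ¬ p ∣ x := fun hpx ↦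
  hn₁ <| (dvd_add_right (dvd_mul_of_dvd_left (dvd_pow hpx two_ne_zero) m₁)).mp
    ((dvd_pow_self p hk).trans hx)

theorem Nat.count_pow_dvd_sq_sub_sq {p : ℕ} (hp : p.Prime) {x : ℤ} (hx : ¬ (p : ℤ) ∣ 2 * x)
    {k : ℕ} (hk : k ≠ 0) (d : ℕ) :
    count (fun b : ℕ ↦ (p : ℤ) ^ k ∣ (b : ℤ) ^ 2 - x ^ 2) (d * p ^ k) = 2 * d := by
  simp only [(Nat.prime_iff_prime_int.mp hp).pow_dvd_sq_sub_sq_iff hx]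
  exact_mod_cast count_dvd_sub_or_dvd_add (pow_ne_zero k hp.ne_zero)
    (fun h ↦ hx (by exact_mod_cast (dvd_pow_self (p : ℤ) hk).trans h)) d

theorem Nat.count_two_pow_dvd_sq_sub_sq {x : ℤ} (hx : Odd x) {k : ℕ} (hk : k ≠ 0) (d : ℕ) :
    Nat.count (fun b : ℕ ↦ (2 : ℤ) ^ (k + 2) ∣ (b : ℤ) ^ 2 - x ^ 2) (d * 2 ^ (k + 1)) = 2 * d := by
  simp only [Int.two_pow_add_two_dvd_sq_sub_sq_iff hx]
  have hx2 : ¬ ((2 ^ (k + 1) : ℕ) : ℤ) ∣ 2 * x := fun h ↦ by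
    rw [Nat.cast_pow, Nat.cast_ofNat, _root_.pow_succ', mul_dvd_mul_iff_left two_ne_zero] at h
    exact Int.not_even_iff_odd.mpr hx (even_iff_two_dvd.mpr ((dvd_pow_self 2 hk).trans h))
  exact_mod_cast count_dvd_sub_or_dvd_add (pow_ne_zero (k + 1) two_ne_zero) hx2 d

abbrev IsCoprimeRoot (m n γ b : ℕ) : Prop :=
  Nat.gcd b γ = 1 ∧ (γ : ℤ) ^ 2 ∣ (b : ℤ) ^ 2 * m + n

theorem isCoprimeRoot_periodic {m n γ : ℕ} (h : γ ∣ 2 * m) :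
    Periodic (IsCoprimeRoot m n γ) γ := fun b ↦ by
  obtain ⟨c, hc⟩ := h
  have e : ((b + γ : ℕ) : ℤ) ^ 2 * m + n = (b ^ 2 * m + n) + γ ^ 2 * (m + b * c) := by
    push_cast
    linear_combination (γ * b : ℤ) * (by exact_mod_cast hc : (2 * m : ℤ) = γ * c)
  simp only [IsCoprimeRoot, Nat.gcd_add_self_left, e, dvd_add_left (dvd_mul_right _ _)]

theorem isCoprimeRoot_mul_iff {m n a c : ℕ} (hac : a.Coprime c) (b : ℕ) :
    IsCoprimeRoot m n (a * c) b ↔ IsCoprimeRoot m n a b ∧ IsCoprimeRoot m n c b := by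
  have hsq : IsCoprime ((a : ℤ) ^ 2) ((c : ℤ) ^ 2) :=
    (Nat.isCoprime_iff_coprime.mpr hac).pow
  simp only [IsCoprimeRoot, ← Nat.coprime_iff_gcd_eq_one, Nat.coprime_mul_iff_right,
    Nat.cast_mul, mul_pow]
  constructor
  · rintro ⟨⟨ha, hc⟩, h⟩
    exact ⟨⟨ha, (dvd_mul_right _ _).trans h⟩, hc, (dvd_mul_left _ _).trans h⟩
  · rintro ⟨⟨ha, ha'⟩, hc, hc'⟩
    exact ⟨⟨ha, hc⟩, hsq.mul_dvd ha' hc'⟩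

theorem count_isCoprimeRoot_eq_prod {m n γ : ℕ} (hγ : γ ≠ 0) (hγm : γ ∣ 2 * m) :
    Nat.count (IsCoprimeRoot m n γ) γ =
      ∏ p ∈ γ.primeFactors,
        Nat.count (IsCoprimeRoot m n (p ^ γ.factorization p)) (p ^ γ.factorization p) := by
  refine Nat.eq_prod_primeFactors_of_mul (f := fun d ↦ Nat.count (IsCoprimeRoot m n d) d)
    (fun a c ha hc hac ↦ ?_) (by simp [Nat.count_one]) hγ hγm
  rw [Nat.count_congr (isCoprimeRoot_mul_iff hac)]
  exact Nat.count_and_of_coprime hac (isCoprimeRoot_periodic ha) (isCoprimeRoot_periodic hc)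

theorem count_isCoprimeRoot_of_forall {m n γ : ℕ}
    (h : ∀ b : ℕ, b.Coprime γ → (γ : ℤ) ^ 2 ∣ (b : ℤ) ^ 2 * m + n) :
    Nat.count (IsCoprimeRoot m n γ) γ = Nat.totient γ := by
  rw [Nat.count_eq_card_filter_range, Nat.totient_eq_card_coprime]
  refine congrArg card (filter_congr fun b _ ↦ ?_)
  rw [Nat.coprime_comm]
  exact ⟨And.left, fun hb ↦ ⟨hb, h b hb⟩⟩

theorem isCoprimeRoot_prime_pow_iff {p α β k m₁ n₁ : ℕ} (hp : p.Prime) (hk : 2 * β = α + k)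
    (hk0 : k ≠ 0) (hm₁ : ¬ p ∣ m₁) (hn₁ : ¬ p ∣ n₁) {x : ℤ}
    (hx : (p : ℤ) ^ k ∣ x ^ 2 * m₁ + n₁) (b : ℕ) :
    IsCoprimeRoot (p ^ α * m₁) (p ^ α * n₁) (p ^ β) b ↔ (p : ℤ) ^ k ∣ (b : ℤ) ^ 2 - x ^ 2 := by
  have hpz : Prime (p : ℤ) := Nat.prime_iff_prime_int.mp hp
  have hpx : ¬ (p : ℤ) ∣ x := not_dvd_of_pow_dvd_sq_mul_add hk0 (by exact_mod_cast hn₁) hx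
  have hdvd : ((p ^ β : ℕ) : ℤ) ^ 2 ∣ (b : ℤ) ^ 2 * (p ^ α * m₁ : ℕ) + (p ^ α * n₁ : ℕ) ↔
      (p : ℤ) ^ k ∣ (b : ℤ) ^ 2 - x ^ 2 := by
    have hcop : IsCoprime ((p : ℤ) ^ k) m₁ :=
      (Nat.isCoprime_iff_coprime.mpr (hp.coprime_iff_not_dvd.mpr hm₁)).pow_left
    rw [show ((p ^ β : ℕ) : ℤ) ^ 2 = (p : ℤ) ^ α * p ^ k by
          rw [Nat.cast_pow, ← pow_mul, ← pow_add]; congr 1; omega,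
        show (b : ℤ) ^ 2 * (p ^ α * m₁ : ℕ) + (p ^ α * n₁ : ℕ) =
            (p : ℤ) ^ α * (b ^ 2 * m₁ + n₁) by push_cast; ring,
        mul_dvd_mul_iff_left (pow_ne_zero α (by exact_mod_cast hp.ne_zero))]
    exact dvd_sq_mul_add_iff_dvd_sq_sub_sq hcop hx b
  have hcoprime : (p : ℤ) ^ k ∣ (b : ℤ) ^ 2 - x ^ 2 → Nat.gcd b (p ^ β) = 1 := fun h ↦ by
    refine Nat.Coprime.pow_right β (Nat.coprime_comm.mp (hp.coprime_iff_not_dvd.mpr fun hpb ↦ ?_))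
    refine hpx (hpz.dvd_of_dvd_pow (n := 2) ?_)
    have hpb2 : (p : ℤ) ∣ (b : ℤ) ^ 2 := dvd_pow (Int.natCast_dvd_natCast.mpr hpb) two_ne_zero
    have := (dvd_pow_self (p : ℤ) hk0).trans h
    rwa [← dvd_sub_right hpb2, sub_sub_cancel] at this
  rw [IsCoprimeRoot, hdvd]
  exact and_iff_right_of_imp hcoprime

theorem exists_isCoprimeRoot_prime_pow_iff {p α β m n : ℕ} (hp : p.Prime) (hm : m ≠ 0)
    (hn : n ≠ 0) (hαm : m.factorization p = α) (hαn : n.factorization p = α) (hlt : α < 2 * β)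
    (hx : ∃ x : ℤ,
      (p : ℤ) ^ (2 * β - α) ∣ x ^ 2 * ((m / p ^ α : ℕ) : ℤ) + ((n / p ^ α : ℕ) : ℤ)) :
    ∃ x : ℤ, ¬ (p : ℤ) ∣ x ∧
      ∀ b : ℕ, IsCoprimeRoot m n (p ^ β) b ↔ (p : ℤ) ^ (2 * β - α) ∣ (b : ℤ) ^ 2 - x ^ 2 := by
  obtain ⟨x, hx⟩ := hx
  have hm₁ : ¬ p ∣ m / p ^ α := hαm ▸ Nat.not_dvd_ordCompl hp hm
  have hn₁ : ¬ p ∣ n / p ^ α := hαn ▸ Nat.not_dvd_ordCompl hp hn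
  refine ⟨x, not_dvd_of_pow_dvd_sq_mul_add (by omega) (by exact_mod_cast hn₁) hx, fun b ↦ ?_⟩
  rw [← Nat.ordProj_mul_ordCompl_eq_self m p, ← Nat.ordProj_mul_ordCompl_eq_self n p, hαm, hαn]
  exact isCoprimeRoot_prime_pow_iff hp (by omega) (by omega) hm₁ hn₁ hx b

theorem le_factorization_of_pow_dvd_two_mul {p β m : ℕ} (hp : p.Prime) (hm : m ≠ 0)
    (h : p ^ β ∣ 2 * m) : β ≤ (2 : ℕ).factorization p + m.factorization p := by
  rw [← Finsupp.add_apply, ← Nat.factorization_mul two_ne_zero hm]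
  exact (hp.pow_dvd_iff_le_factorization (by positivity)).mp h

theorem count_isCoprimeRoot_of_two_mul_le {p β m n : ℕ} (hm : 2 * β ≤ m.factorization p)
    (hn : 2 * β ≤ n.factorization p) :
    Nat.count (IsCoprimeRoot m n (p ^ β)) (p ^ β) = Nat.totient (p ^ β) := by
  refine count_isCoprimeRoot_of_forall fun b _ ↦ ?_
  have hdvd : ∀ c : ℕ, 2 * β ≤ c.factorization p → ((p ^ β : ℕ) : ℤ) ^ 2 ∣ (c : ℤ) :=
    fun c hc ↦ by
      rw [← Nat.cast_pow, ← pow_mul, Int.natCast_dvd_natCast, mul_comm]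
      exact (pow_dvd_pow p hc).trans (Nat.ordProj_dvd c p)
  exact dvd_add (dvd_mul_of_dvd_right (hdvd m hm) _) (hdvd n hn)

theorem count_isCoprimeRoot_two_pow {β α m n : ℕ} (hm : m ≠ 0) (hn : n ≠ 0) (hβ : β ≠ 0)
    (hβm : 2 ^ β ∣ 2 * m) (hα : α = min (m.factorization 2) (n.factorization 2))
    (hex : 2 * β ≤ α ∨ (m.factorization 2 = n.factorization 2 ∧ ∃ x : ℤ,
      (2 : ℤ) ^ (2 * β - α) ∣ x ^ 2 * ((m / 2 ^ α : ℕ) : ℤ) + ((n / 2 ^ α : ℕ) : ℤ))) :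
    Nat.count (IsCoprimeRoot m n (2 ^ β)) (2 ^ β) =
      if 2 * β ≤ α + 2 then 2 ^ (β - 1) else 2 ^ (α + 2 - β) := by
  have htot : Nat.totient (2 ^ β) = 2 ^ (β - 1) := by
    simp [Nat.totient_prime_pow Nat.prime_two (Nat.pos_of_ne_zero hβ)]
  by_cases h : 2 * β ≤ α
  · rw [if_pos (by omega), count_isCoprimeRoot_of_two_mul_le (by omega) (by omega), htot]
  obtain ⟨hmn, hx⟩ := hex.resolve_left h
  obtain ⟨hαm, hαn⟩ : m.factorization 2 = α ∧ n.factorization 2 = α := by omega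
  obtain ⟨x, hx₀, hiff⟩ := exists_isCoprimeRoot_prime_pow_iff (β := β) Nat.prime_two hm hn hαm hαn
    (by omega) (by exact_mod_cast hx)
  have hodd : Odd x := Int.not_even_iff_odd.mp fun he ↦ hx₀ (by exact_mod_cast he.two_dvd)
  split_ifs with h2
  · rw [← htot]
    refine count_isCoprimeRoot_of_forall fun b hb ↦ ((hiff b).mpr ?_).2
    have hbodd : Odd (b : ℤ) :=
      Odd.natCast (Nat.coprime_two_right.mp (hb.coprime_dvd_right (dvd_pow_self 2 hβ)))
    refine (pow_dvd_pow 2 (by omega : 2 * β - α ≤ 3)).trans ?_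
    have := dvd_sub (Int.eight_dvd_sq_sub_one_of_odd hbodd) (Int.eight_dvd_sq_sub_one_of_odd hodd)
    simpa using this
  · have hβα : β ≤ α + 1 := by
      have := le_factorization_of_pow_dvd_two_mul Nat.prime_two hm hβm
      rw [Nat.prime_two.factorization_self] at this
      omega
    obtain ⟨j, hj⟩ : ∃ j, 2 * β - α = j + 2 := ⟨2 * β - α - 2, by omega⟩
    rw [Nat.count_congr hiff, hj, Nat.cast_ofNat,
      show 2 ^ β = 2 ^ (β - (j + 1)) * 2 ^ (j + 1) by rw [← pow_add]; congr 1; omega,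
      Nat.count_two_pow_dvd_sq_sub_sq hodd (by omega), ← pow_succ']
    congr 1
    omega

theorem count_isCoprimeRoot_prime_pow {p β α m n : ℕ} (hp : p.Prime) (hp2 : p ≠ 2) (hm : m ≠ 0)
    (hn : n ≠ 0) (hβ : β ≠ 0) (hβm : p ^ β ∣ 2 * m)
    (hα : α = min (m.factorization p) (n.factorization p))
    (hex : 2 * β ≤ α ∨ (m.factorization p = n.factorization p ∧ ∃ x : ℤ,
      (p : ℤ) ^ (2 * β - α) ∣ x ^ 2 * ((m / p ^ α : ℕ) : ℤ) + ((n / p ^ α : ℕ) : ℤ))) :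
    Nat.count (IsCoprimeRoot m n (p ^ β)) (p ^ β) =
      if 2 * β ≤ α then (p - 1) * p ^ (β - 1) else 2 * p ^ (α - β) := by
  split_ifs with h
  · rw [count_isCoprimeRoot_of_two_mul_le (by omega) (by omega),
      Nat.totient_prime_pow hp (by omega), mul_comm]
  obtain ⟨hmn, hx⟩ := hex.resolve_left h
  obtain ⟨hαm, hαn⟩ : m.factorization p = α ∧ n.factorization p = α := by omega
  obtain ⟨x, hx₀, hiff⟩ :=
    exists_isCoprimeRoot_prime_pow_iff (β := β) hp hm hn hαm hαn (by omega) hx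
  have hp2' : ¬ p ∣ 2 := fun h2 ↦ hp2 ((Nat.prime_dvd_prime_iff_eq hp Nat.prime_two).mp h2)
  have hβα : β ≤ α := by
    have := le_factorization_of_pow_dvd_two_mul hp hm hβm
    rw [Nat.factorization_eq_zero_of_not_dvd hp2'] at this
    omega
  have hx2 : ¬ (p : ℤ) ∣ 2 * x := fun h2x ↦ by
    rcases (Nat.prime_iff_prime_int.mp hp).dvd_mul.mp h2x with h2 | h2
    · exact hp2' (by exact_mod_cast h2)
    · exact hx₀ h2
  rw [Nat.count_congr hiff,
    show p ^ β = p ^ (α - β) * p ^ (2 * β - α) by rw [← pow_add]; congr 1; omega,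
    Nat.count_pow_dvd_sq_sub_sq hp hx2 (by omega)]

/-- Proposition 3.5 (counting part): under the existence conditions, the number of
residues `b` modulo `γ` coprime to `γ` with `γ² ∣ b²m̃ + n` equals `∏_{p ∣ γ} M_p`,
where for odd `p` (with `β = v_p(γ)`, `α = min(v_p(m̃), v_p(n))`)
`M_p = (p−1)p^{β−1}` if `β ≤ α/2` and `M_p = 2p^{α−β}` otherwise, and
`M_2 = 2^{β−1}` if `β ≤ α/2 + 1` and `M_2 = 2^{α+2−β}` otherwise.
Here `mt` plays the role of `m̃`. -/
theorem stmt_19 (mt n γ : ℕ) (hmt : 0 < mt) (hn : 0 < n) (hγ : 0 < γ)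
    (hdvd : γ ∣ Nat.gcd (2 * mt) (2 * n))
    (hex : ∀ p : ℕ, p.Prime → p ∣ γ →
      ((mt.factorization p ≠ n.factorization p ∧
          2 * γ.factorization p ≤ min (mt.factorization p) (n.factorization p)) ∨
       (mt.factorization p = n.factorization p ∧
          (2 * γ.factorization p ≤ min (mt.factorization p) (n.factorization p) ∨
           (2 * γ.factorization p > min (mt.factorization p) (n.factorization p) ∧
            ∃ x : ℤ,
              (p : ℤ) ^ (2 * γ.factorization p
                  - min (mt.factorization p) (n.factorization p)) ∣
                x ^ 2 * ((mt / p ^ min (mt.factorization p) (n.factorization p) : ℕ) : ℤ)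
                  + ((n / p ^ min (mt.factorization p) (n.factorization p) : ℕ) : ℤ)))))) :
    ((Finset.range γ).filter
        (fun b : ℕ => Nat.gcd b γ = 1 ∧ (γ : ℤ) ^ 2 ∣ (b : ℤ) ^ 2 * mt + n)).card
      = ∏ p ∈ γ.primeFactors,
          (if p = 2 then
            (if 2 * γ.factorization 2 ≤ min (mt.factorization 2) (n.factorization 2) + 2
              then 2 ^ (γ.factorization 2 - 1)
              else 2 ^ (min (mt.factorization 2) (n.factorization 2) + 2
                - γ.factorization 2))
           else
            (if 2 * γ.factorization p ≤ min (mt.factorization p) (n.factorization p)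
              then (p - 1) * p ^ (γ.factorization p - 1)
              else 2 * p ^ (min (mt.factorization p) (n.factorization p)
                - γ.factorization p))) := by
  have hγm : γ ∣ 2 * mt := hdvd.trans (Nat.gcd_dvd_left _ _)
  rw [← Nat.count_eq_card_filter_range]
  refine (count_isCoprimeRoot_eq_prod hγ.ne' hγm).trans (prod_congr rfl fun p hp ↦ ?_)
  have hp' := Nat.prime_of_mem_primeFactors hp
  have hβ : γ.factorization p ≠ 0 :=
    Finsupp.mem_support_iff.mp (Nat.support_factorization γ ▸ hp)
  have hβm : p ^ γ.factorization p ∣ 2 * mt := (Nat.ordProj_dvd γ p).trans hγm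
  have hexp := hex p hp' (Nat.dvd_of_mem_primeFactors hp)
  by_cases hp2 : p = 2
  · subst hp2
    rw [if_pos rfl]
    exact count_isCoprimeRoot_two_pow hmt.ne' hn.ne' hβ hβm rfl (by tauto)
  · rw [if_neg hp2]
    exact count_isCoprimeRoot_prime_pow hp' hp2 hmt.ne' hn.ne' hβ hβm rfl (by tauto)
end
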